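/- arXiv:2106.10011 — 10 statements merged into one kernel-verified Lean document; each statement's English description precedes it below -/
import Mathlib

section
/- Let E be a locally convex Hausdorff topological vector space over ℂ, let T : E → E be a continuous linear operator which is Cesàro bounded, and let x ∈ E satisfy lim_{n→∞} (1/n)·Tⁿx = 0. Then for every y ∈ E the following conditions are equivalent: (a) Ty = y and y belongs to the closed convex hull of the orbit {Tᵐx : m ≥ 0}; (b) T^[n]x → y in the topology of E as n → ∞; (c) u(T^[n]x) → u(y) as n → ∞ for every continuous linear functional u on E (i.e. T^[n]x → y in the weak topology σ(E,E′)); (d) y is a cluster point of the sequence (T^[n]x)_{n≥1} in the weak topology σ(E,E′). -/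
/-!
Telescoping gives `T^[n] (T z - z) = n⁻¹ • (T^(n+1) z - T z)`, so `n⁻¹ Tⁿ x → 0` yields
`T^[n] (Tᵐ x - x) → 0` for every `m`. The set of `z` with `T^[n] (z - x) → 0` is convex and, by
equicontinuity of the means, closed; hence it contains the closed convex hull `C` of the orbit,
and for a fixed point `y ∈ C` this says `T^[n] x → y`. Conversely the means lie in `C` and
`T (T^[n] x) - T^[n] x → 0`; since `T - 1` is weakly continuous and the weak topology is Hausdorff
(Hahn–Banach), a weak cluster point `y` is fixed, and it lies in the weak closure of `C`, which is
the closure of `C` because `C` is convex.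
-/

open Filter Topology

/-- The `n`-th Cesàro mean of `T` applied to `x`: `(1/n) ∑_{m=1}^{n} Tᵐ x`. -/
noncomputable def cesaroMean {E : Type*} [AddCommGroup E] [Module ℂ E] [TopologicalSpace E]
    (T : E →L[ℂ] E) (n : ℕ) (x : E) : E :=
  (n : ℂ)⁻¹ • ∑ m ∈ Finset.Icc 1 n, (T ^ m) x

instance RCLike.separatingDual {𝕜 E : Type*} [RCLike 𝕜] [AddCommGroup E] [Module 𝕜 E]
    [Module ℝ E] [IsScalarTower ℝ 𝕜 E] [TopologicalSpace E] [IsTopologicalAddGroup E]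
    [ContinuousSMul 𝕜 E] [LocallyConvexSpace ℝ E] [T1Space E] : SeparatingDual 𝕜 E :=
  ⟨fun _ hx ↦ RCLike.geometric_hahn_banach_point_point hx |>.imp fun _ hf hf' ↦ by
    simp [hf'] at hf⟩

theorem sum_Icc_pow_mul_sub_one {R : Type*} [Ring R] (a : R) (n : ℕ) :
    (∑ m ∈ Finset.Icc 1 n, a ^ m) * (a - 1) = a ^ (n + 1) - a := by
  induction n with
  | zero => simp
  | succ n ih =>
    rw [Finset.sum_Icc_succ_top (by omega), add_mul, ih, mul_sub, mul_one, ← pow_succ]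
    abel

section Operator

variable {E : Type*} [AddCommGroup E] [Module ℂ E] [TopologicalSpace E]
  [IsTopologicalAddGroup E] [ContinuousConstSMul ℂ E] (T : E →L[ℂ] E)

noncomputable def cesaroOp (n : ℕ) : E →L[ℂ] E :=
  (n : ℂ)⁻¹ • ∑ m ∈ Finset.Icc 1 n, T ^ m

theorem coe_cesaroOp (n : ℕ) : ⇑(cesaroOp T n) = cesaroMean T n := by
  ext z
  simp [cesaroOp, cesaroMean]

theorem commute_cesaroOp (n : ℕ) : Commute T (cesaroOp T n) :=
  (Commute.sum_right _ _ _ fun m _ ↦ (Commute.refl T).pow_right m).smul_right _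

theorem cesaroOp_mul_sub_one (n : ℕ) :
    cesaroOp T n * (T - 1) = (n : ℂ)⁻¹ • (T ^ (n + 1) - T) := by
  rw [cesaroOp, smul_mul_assoc, sum_Icc_pow_mul_sub_one]

theorem cesaroOp_apply_eq_self {z : E} (hz : T z = z) {n : ℕ} (hn : n ≠ 0) :
    cesaroOp T n z = z := by
  have hpow (m : ℕ) : (T ^ m) z = z := by
    induction m with
    | zero => rfl
    | succ m ih => rw [pow_succ, mul_apply_eq_comp, hz, ih]
  simp [coe_cesaroOp, cesaroMean, hpow, ← Nat.cast_smul_eq_nsmul ℂ, smul_smul,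
    inv_mul_cancel₀ (Nat.cast_ne_zero (R := ℂ) |>.2 hn)]

end Operator

theorem cesaroMean_mem_convexHull {E : Type*} [AddCommGroup E] [Module ℂ E] [Module ℝ E]
    [IsScalarTower ℝ ℂ E] [TopologicalSpace E] (T : E →L[ℂ] E) {n : ℕ} (hn : n ≠ 0) (z : E) :
    cesaroMean T n z ∈ convexHull ℝ (Set.range fun m : ℕ ↦ (T ^ m) z) := by
  have hcenter : cesaroMean T n z = (Finset.Icc 1 n).centerMass (fun _ ↦ (1 : ℝ))
      (fun m ↦ (T ^ m) z) := by
    simp [cesaroMean, Finset.centerMass, RCLike.real_smul_eq_coe_smul (K := ℂ)]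
  rw [hcenter]
  exact (Finset.Icc 1 n).centerMass_mem_convexHull (fun _ _ ↦ zero_le_one)
    (by simp; omega) fun m _ ↦ ⟨m, rfl⟩

section Limits

variable {E : Type*} [AddCommGroup E] [Module ℂ E] [TopologicalSpace E]
  [IsTopologicalAddGroup E] [ContinuousSMul ℂ E] (T : E →L[ℂ] E)

theorem tendsto_cesaroOp_apply_sub {z : E}
    (hz : Tendsto (fun n : ℕ ↦ (n : ℂ)⁻¹ • (T ^ n) z) atTop (𝓝 0)) :
    Tendsto (fun n ↦ cesaroOp T n (T z - z)) atTop (𝓝 0) := by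
  have hrw (n : ℕ) : cesaroOp T n (T z - z) = T ((n : ℂ)⁻¹ • (T ^ n) z) - (n : ℂ)⁻¹ • T z := by
    rw [show T z - z = (T - 1) z from rfl, ← mul_apply_eq_comp, cesaroOp_mul_sub_one,
      smul_apply, sub_apply, pow_succ', mul_apply_eq_comp, map_smul, smul_sub]
  have hlim := ((T.continuous.tendsto 0).comp hz).sub
    ((tendsto_inv_atTop_nhds_zero_nat (𝕜 := ℂ)).smul_const (T z))
  rw [map_zero, zero_smul, sub_zero] at hlim
  exact hlim.congr fun n ↦ (hrw n).symm

theorem tendsto_cesaroOp_apply_pow_sub {x : E}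
    (hx : Tendsto (fun n : ℕ ↦ (n : ℂ)⁻¹ • (T ^ n) x) atTop (𝓝 0)) (j : ℕ) :
    Tendsto (fun n ↦ cesaroOp T n ((T ^ j) x - x)) atTop (𝓝 0) := by
  induction j with
  | zero => simpa using tendsto_const_nhds
  | succ j ih =>
    have hTj : Tendsto (fun n : ℕ ↦ (n : ℂ)⁻¹ • (T ^ n) ((T ^ j) x)) atTop (𝓝 0) := by
      have hcomm (n : ℕ) : (n : ℂ)⁻¹ • (T ^ n) ((T ^ j) x) = (T ^ j) ((n : ℂ)⁻¹ • (T ^ n) x) := by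
        rw [map_smul, ← mul_apply_eq_comp, ← mul_apply_eq_comp, ← pow_add, ← pow_add, add_comm]
      simpa only [hcomm, map_zero, Function.comp_def] using ((T ^ j).continuous.tendsto 0).comp hx
    have hsplit : (T ^ (j + 1)) x - x = (T ((T ^ j) x) - (T ^ j) x) + ((T ^ j) x - x) := by
      rw [pow_succ', mul_apply_eq_comp]
      abel
    simp only [hsplit, map_add]
    simpa using (tendsto_cesaroOp_apply_sub T hTj).add ih

end Limits

section Equicontinuous

variable {E : Type*} [AddCommGroup E] [Module ℂ E] [Module ℝ E] [IsScalarTower ℝ ℂ E]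
  [UniformSpace E] [IsUniformAddGroup E] [ContinuousSMul ℂ E] {T : E →L[ℂ] E} {x : E}

theorem tendsto_cesaroOp_apply_sub_of_mem_closure_convexHull
    (hCes : Equicontinuous fun n : ℕ ↦ ⇑(cesaroOp T (n + 1)))
    (hx : Tendsto (fun n : ℕ ↦ (n : ℂ)⁻¹ • (T ^ n) x) atTop (𝓝 0)) {z : E}
    (hz : z ∈ closure (convexHull ℝ (Set.range fun m : ℕ ↦ (T ^ m) x))) :
    Tendsto (fun n ↦ cesaroOp T (n + 1) (z - x)) atTop (𝓝 0) := by
  let S := {w : E | Tendsto (fun n ↦ cesaroOp T (n + 1) (w - x)) atTop (𝓝 0)}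
  have hclosed : IsClosed S :=
    (hCes.isClosed_setOfPred_tendsto (f := fun _ ↦ 0) continuous_const).preimage
      (continuous_sub_right x)
  have hconvex : Convex ℝ S := by
    have : ContinuousSMul ℝ E := IsScalarTower.continuousSMul ℂ
    intro z₁ h₁ z₂ h₂ a b _ _ hab
    have hcomb : a • z₁ + b • z₂ - x = a • (z₁ - x) + b • (z₂ - x) := by
      rw [smul_sub, smul_sub, sub_add_sub_comm, ← add_smul, hab, one_smul]
    have hlim := (h₁.const_smul a).add (h₂.const_smul b)
    rw [smul_zero, smul_zero, add_zero] at hlim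
    simpa only [S, Set.mem_ofPred_eq, hcomb, map_add, ContinuousLinearMap.map_smul_of_tower]
      using hlim
  have horbit : Set.range (fun m : ℕ ↦ (T ^ m) x) ⊆ S := by
    rintro _ ⟨j, rfl⟩
    exact (tendsto_cesaroOp_apply_pow_sub T hx j).comp (tendsto_add_atTop_nat 1)
  exact closure_minimal (convexHull_min horbit hconvex) hclosed hz

theorem tendsto_cesaroOp_apply_of_mem_closure_convexHull
    (hCes : Equicontinuous fun n : ℕ ↦ ⇑(cesaroOp T (n + 1)))
    (hx : Tendsto (fun n : ℕ ↦ (n : ℂ)⁻¹ • (T ^ n) x) atTop (𝓝 0)) {y : E} (hTy : T y = y)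
    (hy : y ∈ closure (convexHull ℝ (Set.range fun m : ℕ ↦ (T ^ m) x))) :
    Tendsto (fun n ↦ cesaroOp T (n + 1) x) atTop (𝓝 y) := by
  have hfix (n : ℕ) : cesaroOp T (n + 1) x = y - cesaroOp T (n + 1) (y - x) := by
    rw [map_sub, cesaroOp_apply_eq_self T hTy n.succ_ne_zero, sub_sub_cancel]
  have hlim := (tendsto_const_nhds (x := y)).sub
    (tendsto_cesaroOp_apply_sub_of_mem_closure_convexHull hCes hx hy)
  rw [sub_zero] at hlim
  exact hlim.congr fun n ↦ (hfix n).symm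

end Equicontinuous

theorem tendsto_toWeakSpace_iff {𝕜 E α : Type*} [Field 𝕜] [TopologicalSpace 𝕜]
    [IsTopologicalRing 𝕜] [AddCommGroup E] [Module 𝕜 E] [TopologicalSpace E]
    [SeparatingDual 𝕜 E] {l : Filter α} {f : α → E} {y : E} :
    Tendsto (fun i ↦ toWeakSpace 𝕜 E (f i)) l (𝓝 (toWeakSpace 𝕜 E y)) ↔
      ∀ u : E →L[𝕜] 𝕜, Tendsto (fun i ↦ u (f i)) l (𝓝 (u y)) :=
  WeakBilin.tendsto_iff_forall_eval_tendsto _ (separatingDual_iff_injective.1 ‹_›)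

theorem ContinuousLinearMap.eq_of_mapClusterPt_toWeakSpace {𝕜 E F α : Type*} [Field 𝕜]
    [TopologicalSpace 𝕜] [IsTopologicalRing 𝕜] [T2Space 𝕜] [AddCommGroup E] [Module 𝕜 E]
    [TopologicalSpace E] [AddCommGroup F] [Module 𝕜 F] [TopologicalSpace F]
    [SeparatingDual 𝕜 F] (S : E →L[𝕜] F) {l : Filter α} {f : α → E} {y : E} {z : F}
    (hy : MapClusterPt (toWeakSpace 𝕜 E y) l fun i ↦ toWeakSpace 𝕜 E (f i))
    (hS : Tendsto (fun i ↦ S (f i)) l (𝓝 z)) : S y = z := by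
  have hweak : Tendsto (fun i ↦ toWeakSpace 𝕜 F (S (f i))) l (𝓝 (toWeakSpace 𝕜 F z)) :=
    ((toWeakSpaceCLM 𝕜 F).continuous.tendsto z).comp hS
  exact (toWeakSpace 𝕜 F).injective <|
    eq_of_nhds_neBot <|
      (hy.continuousAt_comp (WeakSpace.map S).continuous.continuousAt).clusterPt.mono hweak

theorem Convex.mem_closure_of_mapClusterPt_toWeakSpace {𝕜 E α : Type*} [RCLike 𝕜]
    [AddCommGroup E] [Module 𝕜 E] [Module ℝ E] [IsScalarTower ℝ 𝕜 E] [TopologicalSpace E]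
    [IsTopologicalAddGroup E] [ContinuousSMul 𝕜 E] [LocallyConvexSpace ℝ E] {s : Set E}
    (hs : Convex ℝ s) {l : Filter α} {f : α → E} {y : E}
    (hy : MapClusterPt (toWeakSpace 𝕜 E y) l fun i ↦ toWeakSpace 𝕜 E (f i))
    (hf : ∀ᶠ i in l, f i ∈ s) : y ∈ closure s := by
  have hmem : toWeakSpace 𝕜 E y ∈ closure (toWeakSpace 𝕜 E '' s) :=
    isClosed_closure.mem_of_mapClusterPt hy (hf.mono fun i hi ↦ subset_closure ⟨_, hi, rfl⟩)
  rw [← hs.toWeakSpace_closure 𝕜] at hmem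
  obtain ⟨y', hy', hyy'⟩ := hmem
  rwa [← (toWeakSpace 𝕜 E).injective hyy']

/-- Eberlein's mean ergodic theorem on a locally convex Hausdorff space. -/
theorem stmt0 {E : Type*} [AddCommGroup E] [Module ℂ E] [Module ℝ E] [IsScalarTower ℝ ℂ E]
    [UniformSpace E] [IsUniformAddGroup E] [ContinuousSMul ℂ E]
    [LocallyConvexSpace ℝ E] [T2Space E]
    (T : E →L[ℂ] E)
    -- `T` is Cesàro bounded: the family `{T^[n] : n ≥ 1}` is equicontinuous
    (hCes : Equicontinuous fun n : ℕ => cesaroMean T (n + 1))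
    (x : E)
    -- `lim_{n→∞} (1/n) Tⁿ x = 0`
    (hx : Tendsto (fun n : ℕ => (n : ℂ)⁻¹ • (T ^ n) x) atTop (𝓝 (0 : E)))
    (y : E) :
    List.TFAE
      [ -- (a) `T y = y` and `y` is in the closed convex hull of the orbit of `x`
        T y = y ∧ y ∈ closure (convexHull ℝ (Set.range fun m : ℕ => (T ^ m) x)),
        -- (b) `y = lim_n T^[n] x` in the topology of `E`
        Tendsto (fun n : ℕ => cesaroMean T (n + 1) x) atTop (𝓝 y),
        -- (c) `y = lim_n T^[n] x` in the weak topology `σ(E,E′)`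
        ∀ u : E →L[ℂ] ℂ,
          Tendsto (fun n : ℕ => u (cesaroMean T (n + 1) x)) atTop (𝓝 (u y)),
        -- (d) `y` is a `σ(E,E′)`-cluster point of the sequence `(T^[n] x)ₙ`
        MapClusterPt (toWeakSpace ℂ E y) atTop
          (fun n : ℕ => toWeakSpace ℂ E (cesaroMean T (n + 1) x)) ] := by
  simp only [← coe_cesaroOp] at hCes ⊢
  tfae_have 1 → 2
  | ⟨hTy, hy⟩ => tendsto_cesaroOp_apply_of_mem_closure_convexHull hCes hx hTy hy
  tfae_have 2 → 3
  | h, u => (u.continuous.tendsto y).comp h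
  tfae_have 3 → 4
  | h => (tendsto_toWeakSpace_iff.2 h).mapClusterPt
  tfae_have 4 → 1
  | hd => by
    have hmean : Tendsto (fun n ↦ (T - 1) (cesaroOp T (n + 1) x)) atTop (𝓝 0) := by
      have hcomm (n : ℕ) : (T - 1) (cesaroOp T (n + 1) x) = cesaroOp T (n + 1) (T x - x) := by
        rw [sub_apply, one_apply_eq_self, map_sub, ← mul_apply_eq_comp,
          (commute_cesaroOp T (n + 1)).eq, mul_apply_eq_comp]
      simpa only [hcomm, Function.comp_def] using
        (tendsto_cesaroOp_apply_sub T hx).comp (tendsto_add_atTop_nat 1)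
    refine ⟨sub_eq_zero.1 ((T - 1).eq_of_mapClusterPt_toWeakSpace hd hmean), ?_⟩
    refine (convex_convexHull ℝ _).mem_closure_of_mapClusterPt_toWeakSpace hd
      (Eventually.of_forall fun n ↦ ?_)
    simpa only [coe_cesaroOp] using cesaroMean_mem_convexHull T n.succ_ne_zero x
  tfae_finish
end

section
/- Let E be a locally convex Hausdorff topological vector space over ℂ and let T : E → E be a continuous linear operator which is Cesàro bounded. Then T is mean ergodic if and only if for every x ∈ E one has lim_{n→∞} (1/n)·Tⁿx = 0 and the set {T^[n]x : n ≥ 1} is relatively compact in the weak topology σ(E,E′). -/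
/-!
For `⇒`, `(n + 1)⁻¹ Tⁿ⁺¹ x` is `T^[n+1] x - n/(n+1) T^[n] x`, a difference of two sequences with the
same limit, and a weakly convergent sequence has relatively compact range.

For `⇐`, the means of `w - T w` telescope to `n⁻¹ (T w - Tⁿ⁺¹ w) → 0`, and equicontinuity carries
this to the closure of `range (1 - T)`. A weak cluster point `y` of `T^[n] x` is fixed by `T`, and
`x - y` lies in the weak closure of `range (1 - T)`, which is its closure because the set is convex
(Hahn–Banach). Hence `T^[n] x = y + T^[n] (x - y) → y`. The pointwise limit is linear, and
continuous by equicontinuity.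
-/

open Filter Topology

theorem MapClusterPt.eq_of_tendsto {α X : Type*} [TopologicalSpace X] [T2Space X]
    {F : Filter α} {u : α → X} {x y : X} (hx : MapClusterPt x F u) (hu : Tendsto u F (𝓝 y)) :
    x = y :=
  eq_of_nhds_neBot (hx.clusterPt.mono hu)

theorem SeparatingDual.of_locallyConvexSpace (𝕜 E : Type*) [RCLike 𝕜] [AddCommGroup E] [Module 𝕜 E]
    [Module ℝ E] [IsScalarTower ℝ 𝕜 E] [TopologicalSpace E] [IsTopologicalAddGroup E]
    [ContinuousSMul 𝕜 E] [LocallyConvexSpace ℝ E] [T1Space E] : SeparatingDual 𝕜 E := by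
  have : ContinuousSMul ℝ E := IsScalarTower.continuousSMul 𝕜
  refine ⟨fun x hx => ?_⟩
  obtain ⟨f, hf⟩ := RCLike.geometric_hahn_banach_point_point (𝕜 := 𝕜) hx
  exact ⟨f, fun h => by simp [h] at hf⟩

theorem Equicontinuous.exists_continuousLinearMap_tendsto {ι 𝕜 E F : Type*} [Semiring 𝕜]
    [AddCommMonoid E] [Module 𝕜 E] [TopologicalSpace E] [AddCommMonoid F] [Module 𝕜 F]
    [UniformSpace F] [T2Space F] [ContinuousAdd F] [ContinuousConstSMul 𝕜 F]
    {l : Filter ι} [l.NeBot] {g : ι → E →ₗ[𝕜] F} (hg : Equicontinuous fun i => ⇑(g i))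
    (hlim : ∀ x, ∃ y, Tendsto (fun i => g i x) l (𝓝 y)) :
    ∃ P : E →L[𝕜] F, ∀ x, Tendsto (fun i => g i x) l (𝓝 (P x)) := by
  choose f hf using hlim
  have hfg : Tendsto (fun i x => g i x) l (𝓝 f) := tendsto_pi_nhds.2 hf
  exact ⟨⟨linearMapOfTendsto f g hfg, hfg.continuous_of_equicontinuous hg⟩, hf⟩

section Algebra

variable {E : Type*} [AddCommGroup E] [Module ℂ E] [TopologicalSpace E] (T : E →L[ℂ] E)

noncomputable def cesaroMeanLinearMap (n : ℕ) : E →ₗ[ℂ] E where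
  toFun := cesaroMean T n
  map_add' x y := by simp only [cesaroMean, map_add, Finset.sum_add_distrib, smul_add]
  map_smul' c x := by
    simp only [cesaroMean, map_smul, ← Finset.smul_sum, RingHom.id_apply]
    exact smul_comm _ _ _

theorem cesaroMean_sub (n : ℕ) (x y : E) :
    cesaroMean T n (x - y) = cesaroMean T n x - cesaroMean T n y :=
  map_sub (cesaroMeanLinearMap T n) x y

theorem natCast_smul_cesaroMean (n : ℕ) (x : E) :
    (n : ℂ) • cesaroMean T n x = ∑ m ∈ Finset.Icc 1 n, (T ^ m) x := by
  rcases Nat.eq_zero_or_pos n with rfl | hn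
  · simp
  · rw [cesaroMean, smul_smul, mul_inv_cancel₀ (by exact_mod_cast hn.ne'), one_smul]

theorem inv_smul_pow_succ_apply (n : ℕ) (x : E) :
    ((n : ℂ) + 1)⁻¹ • (T ^ (n + 1)) x =
      cesaroMean T (n + 1) x - ((n : ℂ) / (n + 1)) • cesaroMean T n x := by
  rw [div_eq_inv_mul, ← smul_smul, natCast_smul_cesaroMean, cesaroMean,
    Finset.sum_Icc_succ_top (by omega), Nat.cast_add_one, smul_add, add_sub_cancel_left]

theorem cesaroMean_sub_apply_self (n : ℕ) (x : E) :
    cesaroMean T n (x - T x) = (n : ℂ)⁻¹ • (T x - (T ^ (n + 1)) x) := by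
  rcases Nat.eq_zero_or_pos n with rfl | hn
  · simp [cesaroMean]
  have hstep : ∀ m, (T ^ m) (x - T x) = -((T ^ (m + 1)) x - (T ^ m) x) := fun m => by
    rw [map_sub, pow_succ, mul_apply_eq_comp, neg_sub]
  rw [cesaroMean, Finset.sum_congr rfl fun m _ => hstep m, Finset.sum_neg_distrib,
    Finset.sum_Icc_sub hn fun m => (T ^ m) x, pow_one, neg_sub]

theorem cesaroMean_apply_comm (n : ℕ) (x : E) : cesaroMean T n (T x) = T (cesaroMean T n x) := by
  simp only [cesaroMean, map_smul, map_sum, ← mul_apply_eq_comp, ← pow_succ, ← pow_succ']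

theorem cesaroMean_succ_of_apply_eq {y : E} (hy : T y = y) (n : ℕ) :
    cesaroMean T (n + 1) y = y := by
  have hpow : ∀ m, (T ^ m) y = y := fun m => by
    rw [pow_apply_eq_iterate]; exact Function.IsFixedPt.iterate hy m
  rw [cesaroMean, Finset.sum_congr rfl fun m _ => hpow m, Finset.sum_const, Nat.card_Icc,
    Nat.add_sub_cancel, ← Nat.cast_smul_eq_nsmul ℂ, smul_smul,
    inv_mul_cancel₀ (by exact_mod_cast n.succ_ne_zero), one_smul]

theorem sub_pow_apply_mem_range (m : ℕ) (x : E) :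
    x - (T ^ m) x ∈ LinearMap.range (1 - T.toLinearMap) :=
  ⟨(∑ i ∈ Finset.range m, T.toLinearMap ^ i) x, by
    rw [← Module.End.mul_apply, mul_neg_geom_sum]; simp [Module.End.coe_pow]⟩

theorem sub_cesaroMean_succ_mem_range (n : ℕ) (x : E) :
    x - cesaroMean T (n + 1) x ∈ LinearMap.range (1 - T.toLinearMap) := by
  have hx : x = ((n + 1 : ℕ) : ℂ)⁻¹ • ∑ _m ∈ Finset.Icc 1 (n + 1), x := by
    rw [Finset.sum_const, Nat.card_Icc, Nat.add_sub_cancel, ← Nat.cast_smul_eq_nsmul ℂ, smul_smul,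
      inv_mul_cancel₀ (by exact_mod_cast n.succ_ne_zero), one_smul]
  nth_rewrite 1 [hx]
  rw [cesaroMean, ← smul_sub, ← Finset.sum_sub_distrib]
  exact Submodule.smul_mem _ _ (Submodule.sum_mem _ fun m _ => sub_pow_apply_mem_range T m x)

end Algebra

section Convergence

variable {E : Type*} [AddCommGroup E] [Module ℂ E] [TopologicalSpace E] [IsTopologicalAddGroup E]
  [ContinuousSMul ℂ E] {T : E →L[ℂ] E}

theorem tendsto_inv_smul_pow_of_tendsto_cesaroMean {x y : E}
    (h : Tendsto (fun n => cesaroMean T (n + 1) x) atTop (𝓝 y)) :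
    Tendsto (fun n : ℕ => (n : ℂ)⁻¹ • (T ^ n) x) atTop (𝓝 0) := by
  have hprev : Tendsto (fun n => cesaroMean T n x) atTop (𝓝 y) :=
    (tendsto_add_atTop_iff_nat 1).1 h
  have hdiff := h.sub ((tendsto_natCast_div_add_atTop (1 : ℂ)).smul hprev)
  rw [one_smul, sub_self] at hdiff
  refine (tendsto_add_atTop_iff_nat 1).1 (hdiff.congr fun n => ?_)
  rw [← inv_smul_pow_succ_apply, Nat.cast_add_one]

theorem tendsto_cesaroMean_of_mem_range
    (hT : ∀ x, Tendsto (fun n : ℕ => (n : ℂ)⁻¹ • (T ^ n) x) atTop (𝓝 0)) {z : E}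
    (hz : z ∈ LinearMap.range (1 - T.toLinearMap)) :
    Tendsto (fun n => cesaroMean T n z) atTop (𝓝 0) := by
  obtain ⟨w, rfl⟩ := hz
  have hlim := (tendsto_inv_atTop_nhds_zero_nat (𝕜 := ℂ)).smul_const (T w) |>.sub (hT (T w))
  rw [zero_smul, sub_zero] at hlim
  refine hlim.congr fun n => ?_
  rw [LinearMap.sub_apply, Module.End.one_apply, ContinuousLinearMap.coe_coe,
    cesaroMean_sub_apply_self, smul_sub, pow_succ, mul_apply_eq_comp]

end Convergence

theorem tendsto_cesaroMean_of_mem_closure_range {E : Type*} [AddCommGroup E] [Module ℂ E]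
    [UniformSpace E] [IsUniformAddGroup E] [ContinuousSMul ℂ E] {T : E →L[ℂ] E}
    (hCes : Equicontinuous fun n : ℕ => cesaroMean T (n + 1))
    (hT : ∀ x, Tendsto (fun n : ℕ => (n : ℂ)⁻¹ • (T ^ n) x) atTop (𝓝 0)) {z : E}
    (hz : z ∈ closure (LinearMap.range (1 - T.toLinearMap) : Set E)) :
    Tendsto (fun n => cesaroMean T (n + 1) z) atTop (𝓝 0) :=
  closure_minimal
    (fun _ hw => (tendsto_add_atTop_iff_nat 1).2 (tendsto_cesaroMean_of_mem_range hT hw))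
    (hCes.isClosed_setOfPred_tendsto continuous_const) hz

section WeakClusterPoint

variable {E : Type*} [AddCommGroup E] [Module ℂ E] [TopologicalSpace E] [IsTopologicalAddGroup E]
  [ContinuousSMul ℂ E] {T : E →L[ℂ] E} {x y : E}

theorem apply_eq_of_mapClusterPt_toWeakSpace [T2Space (WeakSpace ℂ E)]
    (hT : ∀ x, Tendsto (fun n : ℕ => (n : ℂ)⁻¹ • (T ^ n) x) atTop (𝓝 0))
    (hy : MapClusterPt (toWeakSpace ℂ E y) atTop
      fun n => toWeakSpace ℂ E (cesaroMean T (n + 1) x)) :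
    T y = y := by
  let φ : WeakSpace ℂ E → WeakSpace ℂ E := fun z => WeakSpace.map T z - z
  have hφ : Continuous φ := (WeakSpace.map T).continuous.sub continuous_id
  have hTx : T x - x ∈ LinearMap.range (1 - T.toLinearMap) :=
    ⟨-x, by simp [sub_eq_add_neg, add_comm]⟩
  have hlim : Tendsto (fun n => toWeakSpace ℂ E (cesaroMean T (n + 1) (T x - x))) atTop (𝓝 0) :=
    map_zero (toWeakSpace ℂ E) ▸ ((toWeakSpaceCLM ℂ E).continuous.tendsto 0).comp
      ((tendsto_add_atTop_iff_nat 1).2 (tendsto_cesaroMean_of_mem_range hT hTx))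
  have hφy : φ (toWeakSpace ℂ E y) = 0 := by
    refine (hy.continuousAt_comp hφ.continuousAt).eq_of_tendsto (hlim.congr fun n => ?_)
    rw [cesaroMean_sub, cesaroMean_apply_comm, map_sub]
    rfl
  exact sub_eq_zero.1 <| (toWeakSpace ℂ E).map_eq_zero_iff.1 <| by rw [map_sub]; exact hφy

theorem sub_mem_closure_range_of_mapClusterPt_toWeakSpace [Module ℝ E] [IsScalarTower ℝ ℂ E]
    [LocallyConvexSpace ℝ E]
    (hy : MapClusterPt (toWeakSpace ℂ E y) atTop
      fun n => toWeakSpace ℂ E (cesaroMean T (n + 1) x)) :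
    x - y ∈ closure (LinearMap.range (1 - T.toLinearMap) : Set E) := by
  set R := LinearMap.range (1 - T.toLinearMap)
  have hconv : Convex ℝ (R : Set E) := (R.restrictScalars ℝ).convex
  have hmem : toWeakSpace ℂ E x - toWeakSpace ℂ E y ∈ closure (toWeakSpace ℂ E '' R) :=
    isClosed_closure.mem_of_mapClusterPt
      (hy.continuousAt_comp (continuous_const.sub continuous_id).continuousAt)
      (Eventually.of_forall fun n => subset_closure
        ⟨_, sub_cesaroMean_succ_mem_range T n x, map_sub _ _ _⟩)
  rw [← map_sub, ← hconv.toWeakSpace_closure ℂ] at hmem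
  exact (toWeakSpace ℂ E).injective.mem_set_image.1 hmem

end WeakClusterPoint

section MeanErgodic

variable {E : Type*} [AddCommGroup E] [Module ℂ E] [Module ℝ E] [IsScalarTower ℝ ℂ E]
  [UniformSpace E] [IsUniformAddGroup E] [ContinuousSMul ℂ E] [LocallyConvexSpace ℝ E]
  [T2Space (WeakSpace ℂ E)] {T : E →L[ℂ] E}

theorem tendsto_cesaroMean_of_mapClusterPt_toWeakSpace
    (hCes : Equicontinuous fun n : ℕ => cesaroMean T (n + 1))
    (hT : ∀ x, Tendsto (fun n : ℕ => (n : ℂ)⁻¹ • (T ^ n) x) atTop (𝓝 0)) {x y : E}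
    (hy : MapClusterPt (toWeakSpace ℂ E y) atTop
      fun n => toWeakSpace ℂ E (cesaroMean T (n + 1) x)) :
    Tendsto (fun n => cesaroMean T (n + 1) x) atTop (𝓝 y) := by
  have hfix := apply_eq_of_mapClusterPt_toWeakSpace hT hy
  have hlim := tendsto_const_nhds (x := y) |>.add <|
    tendsto_cesaroMean_of_mem_closure_range hCes hT
      (sub_mem_closure_range_of_mapClusterPt_toWeakSpace hy)
  rw [add_zero] at hlim
  refine hlim.congr fun n => ?_
  rw [cesaroMean_sub, cesaroMean_succ_of_apply_eq T hfix, add_sub_cancel]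

theorem exists_tendsto_cesaroMean_of_isCompact_closure
    (hCes : Equicontinuous fun n : ℕ => cesaroMean T (n + 1))
    (hT : ∀ x, Tendsto (fun n : ℕ => (n : ℂ)⁻¹ • (T ^ n) x) atTop (𝓝 0)) {x : E}
    (hK : IsCompact (closure (Set.range fun n => toWeakSpace ℂ E (cesaroMean T (n + 1) x)))) :
    ∃ y, Tendsto (fun n => cesaroMean T (n + 1) x) atTop (𝓝 y) := by
  obtain ⟨y, -, hy⟩ := hK.exists_mapClusterPt (f := atTop) <|
    tendsto_principal.2 <| Eventually.of_forall fun n => subset_closure ⟨n, rfl⟩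
  refine ⟨(toWeakSpace ℂ E).symm y, tendsto_cesaroMean_of_mapClusterPt_toWeakSpace hCes hT ?_⟩
  rwa [LinearEquiv.apply_symm_apply]

end MeanErgodic

/-- A Cesàro bounded operator on a locally convex Hausdorff space is mean ergodic if and only
if `(1/n) Tⁿ x → 0` and `{T^[n] x : n ≥ 1}` is relatively weakly compact, for every `x`. -/
theorem stmt1 {E : Type*} [AddCommGroup E] [Module ℂ E] [Module ℝ E] [IsScalarTower ℝ ℂ E]
    [UniformSpace E] [IsUniformAddGroup E] [ContinuousSMul ℂ E]
    [LocallyConvexSpace ℝ E] [T2Space E]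
    (T : E →L[ℂ] E)
    -- `T` is Cesàro bounded: the family `{T^[n] : n ≥ 1}` is equicontinuous
    (hCes : Equicontinuous fun n : ℕ => cesaroMean T (n + 1)) :
    -- `T` is mean ergodic
    (∃ P : E →L[ℂ] E, ∀ x : E,
        Tendsto (fun n : ℕ => cesaroMean T (n + 1) x) atTop (𝓝 (P x))) ↔
      ∀ x : E,
        Tendsto (fun n : ℕ => (n : ℂ)⁻¹ • (T ^ n) x) atTop (𝓝 (0 : E)) ∧
        IsCompact (closure
          (Set.range fun n : ℕ => toWeakSpace ℂ E (cesaroMean T (n + 1) x))) := by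
  -- makes `WeakSpace ℂ E` Hausdorff
  have : SeparatingDual ℂ E := SeparatingDual.of_locallyConvexSpace ℂ E
  refine ⟨fun ⟨P, hP⟩ x => ⟨tendsto_inv_smul_pow_of_tendsto_cesaroMean (hP x), ?_⟩, fun h => ?_⟩
  · exact (((toWeakSpaceCLM ℂ E).continuous.tendsto _).comp (hP x)).isCompact_insert_range
      |>.closure_of_subset (Set.subset_insert _ _)
  · exact hCes.exists_continuousLinearMap_tendsto (l := atTop)
      (g := fun n => cesaroMeanLinearMap T (n + 1))
      fun x => exists_tendsto_cesaroMean_of_isCompact_closure hCes (fun x => (h x).1) (h x).2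
end

section
/- Let E be a barrelled locally convex Hausdorff topological vector space over ℂ in which every bounded subset is relatively compact (i.e. E is a Montel space), and let T : E → E be a continuous linear operator. Then T is mean ergodic if and only if T is uniformly mean ergodic. -/
/-!
Convergent sequences are bounded, so the Cesàro means of a mean ergodic operator form a pointwise
bounded, hence (E being barrelled) equicontinuous, sequence of operators. For an equicontinuous
family, pointwise convergence is uniform on compact sets, and in a Montel space every bounded set
has compact closure.
-/

open Filter Topology

noncomputable def cesaroCLM {E : Type*} [AddCommGroup E] [Module ℂ E] [TopologicalSpace E]
    [IsTopologicalAddGroup E] [ContinuousConstSMul ℂ E] (T : E →L[ℂ] E) (n : ℕ) : E →L[ℂ] E :=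
  (n : ℂ)⁻¹ • ∑ m ∈ Finset.Icc 1 n, T ^ m

theorem coe_cesaroCLM {E : Type*} [AddCommGroup E] [Module ℂ E] [TopologicalSpace E]
    [IsTopologicalAddGroup E] [ContinuousConstSMul ℂ E] (T : E →L[ℂ] E) (n : ℕ) :
    ⇑(cesaroCLM T n) = cesaroMean T n := by
  ext x
  simp [cesaroCLM, cesaroMean]

theorem Equicontinuous.tendstoUniformlyOn_of_tendsto {ι X α : Type*} [TopologicalSpace X]
    [UniformSpace α] {F : ι → X → α} {f : X → α} {l : Filter ι} (hF : Equicontinuous F)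
    (hFf : ∀ x, Tendsto (fun i => F i x) l (𝓝 (f x))) {K : Set X} (hK : IsCompact K) :
    TendstoUniformlyOn F f l K := by
  have : CompactSpace K := isCompact_iff_compactSpace.mp hK
  have hFK : Equicontinuous fun i => K.domRestrict (F i) :=
    (equicontinuous_restrict_iff _).mpr (hF.equicontinuousOn K)
  have hpointwise : Tendsto (fun i => K.domRestrict (F i)) l (𝓝 (K.domRestrict f)) :=
    tendsto_pi_nhds.mpr fun x => hFf x
  have huniform := (hFK.tendsto_uniformFun_iff_pi l (K.domRestrict f)).mpr hpointwise
  rw [UniformFun.tendsto_iff_tendstoUniformly] at huniform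
  exact tendstoUniformlyOn_iff_tendstoUniformly_comp_coe.mpr huniform

theorem stmt4_general {E : Type*} [AddCommGroup E] [Module ℂ E]
    [UniformSpace E] [IsUniformAddGroup E] [ContinuousSMul ℂ E]
    -- `E` is barrelled: every pointwise bounded family of continuous linear operators on `E`
    -- is equicontinuous (Banach–Steinhaus property)
    (hbarrelled : ∀ (ι : Type) (f : ι → E →L[ℂ] E),
      (∀ x : E, Bornology.IsVonNBounded ℂ (Set.range fun i => f i x)) →
        Equicontinuous fun i => ⇑(f i))
    -- every bounded subset of `E` is relatively compact
    (hmontel : ∀ s : Set E, Bornology.IsVonNBounded ℂ s → IsCompact (closure s))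
    (T : E →L[ℂ] E) :
    -- `T` is mean ergodic
    (∃ P : E →L[ℂ] E, ∀ x : E,
        Tendsto (fun n : ℕ => cesaroMean T (n + 1) x) atTop (𝓝 (P x))) ↔
      -- `T` is uniformly mean ergodic: the Cesàro means converge to `P` uniformly on every
      -- bounded subset of `E`
      (∃ P : E →L[ℂ] E, ∀ s : Set E, Bornology.IsVonNBounded ℂ s →
        TendstoUniformlyOn (fun n : ℕ => cesaroMean T (n + 1)) (⇑P) atTop s) := by
  constructor
  · rintro ⟨P, hP⟩
    simp only [← coe_cesaroCLM] at hP ⊢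
    have hequicont : Equicontinuous fun n : ℕ => ⇑(cesaroCLM T (n + 1)) :=
      hbarrelled ℕ _ fun x => (hP x).isVonNBounded_range ℂ
    exact ⟨P, fun s hs =>
      (hequicont.tendstoUniformlyOn_of_tendsto hP (hmontel s hs)).mono subset_closure⟩
  · rintro ⟨P, hP⟩
    exact ⟨P, fun x => tendstoUniformlyOn_singleton_iff_tendsto.mp
      (hP {x} (Bornology.isVonNBounded_singleton x))⟩

/-- On a Montel space, an operator is mean ergodic if and only if it is uniformly
mean ergodic. -/
theorem stmt4 {E : Type*} [AddCommGroup E] [Module ℂ E] [Module ℝ E] [IsScalarTower ℝ ℂ E]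
    [UniformSpace E] [IsUniformAddGroup E] [ContinuousSMul ℂ E]
    [LocallyConvexSpace ℝ E] [T2Space E]
    -- `E` is barrelled: every pointwise bounded family of continuous linear operators on `E`
    -- is equicontinuous (Banach–Steinhaus property)
    (hbarrelled : ∀ (ι : Type) (f : ι → E →L[ℂ] E),
      (∀ x : E, Bornology.IsVonNBounded ℂ (Set.range fun i => f i x)) →
        Equicontinuous fun i => ⇑(f i))
    -- every bounded subset of `E` is relatively compact
    (hmontel : ∀ s : Set E, Bornology.IsVonNBounded ℂ s → IsCompact (closure s))
    (T : E →L[ℂ] E) :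
    -- `T` is mean ergodic
    (∃ P : E →L[ℂ] E, ∀ x : E,
        Tendsto (fun n : ℕ => cesaroMean T (n + 1) x) atTop (𝓝 (P x))) ↔
      -- `T` is uniformly mean ergodic: the Cesàro means converge to `P` uniformly on every
      -- bounded subset of `E`
      (∃ P : E →L[ℂ] E, ∀ s : Set E, Bornology.IsVonNBounded ℂ s →
        TendstoUniformlyOn (fun n : ℕ => cesaroMean T (n + 1)) (⇑P) atTop s) :=
  stmt4_general hbarrelled hmontel T
end

section
/- Let E be a barrelled locally convex Hausdorff topological vector space over ℂ and let T : E → E be a continuous linear operator such that lim_{n→∞} (1/n)·Tⁿx = 0 for every x ∈ E. Then the family {(1/n)·Tⁿ : n ≥ 1} is equicontinuous and T is topologizable, i.e. for every continuous seminorm p on E there is a continuous seminorm q on E such that for every m ∈ ℕ there is γ_m > 0 with p(Tᵐx) ≤ γ_m·q(x) for all x ∈ E. -/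
/-!
Since `(1/n) Tⁿ x → 0`, the family `(1/n) Tⁿ` is pointwise bounded, hence equicontinuous by
barrelledness. For a continuous seminorm `p`, equicontinuity bounds every `p ∘ (1/n) Tⁿ` by `1`
on a common neighbourhood of `0`, so `q = ⨆ n, p ∘ (1/n) Tⁿ` is a continuous seminorm, and
`p (Tᵐ x) = m · p ((1/m) Tᵐ x) ≤ m · q x`.
-/

open Filter Topology Uniformity

theorem EquicontinuousAt.eventually_forall_mem_of_mem_nhds_zero {ι X F : Type*}
    [TopologicalSpace X] [AddGroup F] [UniformSpace F] [IsUniformAddGroup F]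
    {f : ι → X → F} {x₀ : X} (hf : EquicontinuousAt f x₀) (hf₀ : ∀ i, f i x₀ = 0)
    {V : Set F} (hV : V ∈ 𝓝 0) : ∀ᶠ x in 𝓝 x₀, ∀ i, f i x ∈ V := by
  have hU : (fun y : F × F => y.2 - y.1) ⁻¹' V ∈ 𝓤 F := by
    rw [uniformity_eq_comap_nhds_zero F]
    exact preimage_mem_comap hV
  filter_upwards [hf _ hU] with x hx i
  simpa [hf₀] using hx i

theorem Seminorm.exists_continuous_forall_le_of_equicontinuousAt {ι 𝕜 E F : Type*}
    [NontriviallyNormedField 𝕜] [AddCommGroup E] [Module 𝕜 E] [TopologicalSpace E]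
    [IsTopologicalAddGroup E] [ContinuousSMul 𝕜 E] [AddCommGroup F] [Module 𝕜 F]
    [UniformSpace F] [IsUniformAddGroup F] {f : ι → E →ₗ[𝕜] F}
    (hf : EquicontinuousAt (fun i => ⇑(f i)) 0) {p : Seminorm 𝕜 F} (hp : Continuous p) :
    ∃ q : Seminorm 𝕜 E, Continuous q ∧ ∀ i x, p (f i x) ≤ q x := by
  have hball : p.ball 0 1 ∈ 𝓝 (0 : F) := p.ball_mem_nhds hp one_pos
  have hev : ∀ᶠ x in 𝓝 (0 : E), ∀ i, p (f i x) ≤ 1 := by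
    filter_upwards [hf.eventually_forall_mem_of_mem_nhds_zero (fun i => map_zero (f i)) hball]
      with x hx i
    exact (p.mem_ball_zero.1 (hx i)).le
  have bdd : BddAbove (Set.range fun i => p.comp (f i)) :=
    bddAbove_of_absorbent (absorbent_nhds_zero hev) fun x hx => ⟨1, Set.forall_mem_range.2 hx⟩
  refine ⟨⨆ i, p.comp (f i), Seminorm.continuous' (r := 1) ?_, fun i x => le_ciSup bdd i x⟩
  filter_upwards [hev] with x hx
  simpa [closedBall_iSup bdd _ one_pos] using hx

theorem Seminorm.apply_pow_le_of_forall_apply_smul_pow_le {𝕜 E : Type*} [RCLike 𝕜]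
    [AddCommGroup E] [Module 𝕜 E] [TopologicalSpace E] {T : E →L[𝕜] E} {p q : Seminorm 𝕜 E}
    (h : ∀ (n : ℕ) (x : E), p (((n + 1 : ℕ) : 𝕜)⁻¹ • (T ^ (n + 1)) x) ≤ q x) (m : ℕ) (x : E) :
    p ((T ^ m) x) ≤ (m + 1) * (p ⊔ q) x := by
  rcases m with _ | n
  · simp [le_sup_left]
  have hscale :
      p ((T ^ (n + 1)) x) = (n + 1 : ℕ) * p (((n + 1 : ℕ) : 𝕜)⁻¹ • (T ^ (n + 1)) x) := by
    rw [map_smul_eq_mul, norm_inv, RCLike.norm_natCast, mul_inv_cancel_left₀ (by positivity)]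
  calc p ((T ^ (n + 1)) x) ≤ (n + 1 : ℕ) * q x := by rw [hscale]; gcongr; exact h n x
    _ ≤ ((n + 1 : ℕ) + 1) * (p ⊔ q) x :=
      mul_le_mul (by linarith) le_sup_right (apply_nonneg q x) (by positivity)

theorem stmt7_general {E : Type*} [AddCommGroup E] [Module ℂ E]
    [UniformSpace E] [IsUniformAddGroup E] [ContinuousSMul ℂ E]
    -- `E` is barrelled: every pointwise bounded family of continuous linear operators on `E`
    -- is equicontinuous (Banach–Steinhaus property)
    (hbarrelled : ∀ (ι : Type) (f : ι → E →L[ℂ] E),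
      (∀ x : E, Bornology.IsVonNBounded ℂ (Set.range fun i => f i x)) →
        Equicontinuous fun i => ⇑(f i))
    (T : E →L[ℂ] E)
    (hT : ∀ x : E, Tendsto (fun n : ℕ => (n : ℂ)⁻¹ • (T ^ n) x) atTop (𝓝 (0 : E))) :
    -- the family `{(1/n) Tⁿ : n ≥ 1}` is equicontinuous ...
    (Equicontinuous fun n : ℕ => fun x : E => ((n + 1 : ℕ) : ℂ)⁻¹ • (T ^ (n + 1)) x) ∧
      -- ... and `T` is topologizable
      ∀ p : Seminorm ℂ E, Continuous p → ∃ q : Seminorm ℂ E, Continuous ⇑q ∧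
        ∀ m : ℕ, ∃ γ : ℝ, 0 < γ ∧ ∀ x : E, p ((T ^ m) x) ≤ γ * q x := by
  set f : ℕ → E →L[ℂ] E := fun n => ((n + 1 : ℕ) : ℂ)⁻¹ • T ^ (n + 1)
  have hequi : Equicontinuous fun n => ⇑(f n) := hbarrelled ℕ f fun x =>
    ((hT x).comp (tendsto_add_atTop_nat 1)).isVonNBounded_range ℂ
  refine ⟨hequi, fun p hp => ?_⟩
  obtain ⟨q, hq, hpq⟩ :=
    p.exists_continuous_forall_le_of_equicontinuousAt (f := fun n => (f n : E →ₗ[ℂ] E)) (hequi 0) hp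
  exact ⟨p ⊔ q, hp.sup hq, fun m => ⟨m + 1, by positivity,
    p.apply_pow_le_of_forall_apply_smul_pow_le hpq m⟩⟩

/-- If `E` is barrelled and `(1/n) Tⁿ x → 0` for every `x`, then `{(1/n) Tⁿ : n ≥ 1}` is
equicontinuous and `T` is topologizable. -/
theorem stmt7 {E : Type*} [AddCommGroup E] [Module ℂ E] [Module ℝ E] [IsScalarTower ℝ ℂ E]
    [UniformSpace E] [IsUniformAddGroup E] [ContinuousSMul ℂ E]
    [LocallyConvexSpace ℝ E] [T2Space E]
    -- `E` is barrelled: every pointwise bounded family of continuous linear operators on `E`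
    -- is equicontinuous (Banach–Steinhaus property)
    (hbarrelled : ∀ (ι : Type) (f : ι → E →L[ℂ] E),
      (∀ x : E, Bornology.IsVonNBounded ℂ (Set.range fun i => f i x)) →
        Equicontinuous fun i => ⇑(f i))
    (T : E →L[ℂ] E)
    (hT : ∀ x : E, Tendsto (fun n : ℕ => (n : ℂ)⁻¹ • (T ^ n) x) atTop (𝓝 (0 : E))) :
    -- the family `{(1/n) Tⁿ : n ≥ 1}` is equicontinuous ...
    (Equicontinuous fun n : ℕ => fun x : E => ((n + 1 : ℕ) : ℂ)⁻¹ • (T ^ (n + 1)) x) ∧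
      -- ... and `T` is topologizable
      ∀ p : Seminorm ℂ E, Continuous p → ∃ q : Seminorm ℂ E, Continuous ⇑q ∧
        ∀ m : ℕ, ∃ γ : ℝ, 0 < γ ∧ ∀ x : E, p ((T ^ m) x) ≤ γ * q x :=
  stmt7_general hbarrelled T hT
end

section
/- Let φ : ℝ → ℝ be a smooth diffeomorphism (a bijection which is infinitely differentiable with infinitely differentiable inverse) with φ′(x) > 0 for all x ∈ ℝ, and assume that both φ and φ⁻¹ have stable orbits. Then for every x ∈ ℝ with φ(x) ≠ x there exist x₁, x₂ ∈ ℝ with φ(x₁) = x₁, φ(x₂) = x₂, x₁ < x < x₂, and φ(t) ≠ t for every t in the open interval (x₁, x₂). -/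
open Filter Topology

/-- A map `φ : ℝ → ℝ` has stable orbits if for every compact set `K ⊆ ℝ` there is a compact
set `L ⊆ ℝ` such that the `n`-fold iterate `φⁿ` maps `K` into `L` for every `n ≥ 0`. -/
def HasStableOrbits (φ : ℝ → ℝ) : Prop :=
  ∀ K : Set ℝ, IsCompact K → ∃ L : Set ℝ, IsCompact L ∧ ∀ n : ℕ, φ^[n] '' K ⊆ L

lemma aux_up (f : ℝ → ℝ) (hc : Continuous f) (hm : Monotone f)
    (horb : HasStableOrbits f) (x : ℝ) (h : x < f x) : ∃ c, x < c ∧ f c = c := by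
  set u : ℕ → ℝ := fun n => f^[n] x with hu
  have hstep : ∀ n, u n ≤ f (u n) := by
    intro n
    induction n with
    | zero => exact h.le
    | succ n ih =>
      have : u (n+1) = f (u n) := Function.iterate_succ_apply' f n x
      rw [this]
      exact hm ih
  have hmono : Monotone u := by
    apply monotone_nat_of_le_succ
    intro n
    have : u (n+1) = f (u n) := Function.iterate_succ_apply' f n x
    rw [this]; exact hstep n
  obtain ⟨L, hL, hLsub⟩ := horb {x} isCompact_singleton
  have hmem : ∀ n, u n ∈ L := fun n => hLsub n ⟨x, rfl, rfl⟩
  have hbdd : BddAbove (Set.range u) := by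
    refine hL.bddAbove.mono ?_
    rintro _ ⟨n, rfl⟩; exact hmem n
  have htend : Tendsto u atTop (𝓝 (⨆ n, u n)) := tendsto_atTop_ciSup hmono hbdd
  set c := ⨆ n, u n with hc'
  have h1 : Tendsto (fun n => u (n+1)) atTop (𝓝 c) := htend.comp (tendsto_add_atTop_nat 1)
  have h2 : Tendsto (fun n => f (u n)) atTop (𝓝 (f c)) := (hc.tendsto c).comp htend
  have heq : (fun n => u (n+1)) = fun n => f (u n) := by
    funext n; exact Function.iterate_succ_apply' f n x
  have hfix : f c = c := tendsto_nhds_unique (heq ▸ h2) h1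
  have hxc : x < c := by
    have : u 1 ≤ c := le_ciSup hbdd 1
    have h1' : u 1 = f x := Function.iterate_one f ▸ rfl
    exact lt_of_lt_of_le (h1' ▸ h) this
  exact ⟨c, hxc, hfix⟩

lemma aux_down (f : ℝ → ℝ) (hc : Continuous f) (hm : Monotone f)
    (horb : HasStableOrbits f) (x : ℝ) (h : f x < x) : ∃ c, c < x ∧ f c = c := by
  set u : ℕ → ℝ := fun n => f^[n] x with hu
  have hstep : ∀ n, f (u n) ≤ u n := by
    intro n
    induction n with
    | zero => exact h.le
    | succ n ih =>
      have : u (n+1) = f (u n) := Function.iterate_succ_apply' f n x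
      rw [this]
      exact hm ih
  have hmono : Antitone u := by
    apply antitone_nat_of_succ_le
    intro n
    have : u (n+1) = f (u n) := Function.iterate_succ_apply' f n x
    rw [this]; exact hstep n
  obtain ⟨L, hL, hLsub⟩ := horb {x} isCompact_singleton
  have hmem : ∀ n, u n ∈ L := fun n => hLsub n ⟨x, rfl, rfl⟩
  have hbdd : BddBelow (Set.range u) := by
    refine hL.bddBelow.mono ?_
    rintro _ ⟨n, rfl⟩; exact hmem n
  have htend : Tendsto u atTop (𝓝 (⨅ n, u n)) := tendsto_atTop_ciInf hmono hbdd
  set c := ⨅ n, u n with hc'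
  have h1 : Tendsto (fun n => u (n+1)) atTop (𝓝 c) := htend.comp (tendsto_add_atTop_nat 1)
  have h2 : Tendsto (fun n => f (u n)) atTop (𝓝 (f c)) := (hc.tendsto c).comp htend
  have heq : (fun n => u (n+1)) = fun n => f (u n) := by
    funext n; exact Function.iterate_succ_apply' f n x
  have hfix : f c = c := tendsto_nhds_unique (heq ▸ h2) h1
  have hxc : c < x := by
    have : c ≤ u 1 := ciInf_le hbdd 1
    have h1' : u 1 = f x := Function.iterate_one f ▸ rfl
    exact lt_of_le_of_lt this (h1' ▸ h)
  exact ⟨c, hxc, hfix⟩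

/-- For an increasing smooth diffeomorphism of `ℝ` such that both it and its inverse have
stable orbits, every non-fixed point lies in an open interval between two fixed points which
contains no fixed point. -/
theorem stmt8 (φ ψ : ℝ → ℝ)
    (hbij : Function.Bijective φ)
    (hφ : ContDiff ℝ (⊤ : ℕ∞) φ) (hψ : ContDiff ℝ (⊤ : ℕ∞) ψ)
    (hleft : Function.LeftInverse ψ φ) (hright : Function.RightInverse ψ φ)
    (hpos : ∀ x : ℝ, 0 < deriv φ x)
    (hφorb : HasStableOrbits φ) (hψorb : HasStableOrbits ψ)
    (x : ℝ) (hx : φ x ≠ x) :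
    ∃ x₁ x₂ : ℝ, φ x₁ = x₁ ∧ φ x₂ = x₂ ∧ x₁ < x ∧ x < x₂ ∧
      ∀ t ∈ Set.Ioo x₁ x₂, φ t ≠ t := by
  have hφm : StrictMono φ := strictMono_of_deriv_pos hpos
  have hψm : StrictMono ψ := by
    intro a b hab
    by_contra hcon
    push_neg at hcon
    have := hφm.monotone hcon
    rw [hright a, hright b] at this
    exact absurd this hab.not_ge
  -- get a fixed point above x and below x
  have key : (∃ a, x < a ∧ φ a = a) ∧ (∃ b, b < x ∧ φ b = b) := by
    rcases hx.lt_or_gt with h | h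
    · -- φ x < x
      have hψx : x < ψ x := by
        have := hψm h
        rwa [hleft x] at this
      obtain ⟨a, ha1, ha2⟩ := aux_up ψ hψ.continuous hψm.monotone hψorb x hψx
      have hfa : φ a = a := by have := congrArg φ ha2; rw [hright] at this; exact this.symm
      obtain ⟨b, hb1, hb2⟩ := aux_down φ hφ.continuous hφm.monotone hφorb x h
      exact ⟨⟨a, ha1, hfa⟩, ⟨b, hb1, hb2⟩⟩
    · -- x < φ x
      obtain ⟨a, ha1, ha2⟩ := aux_up φ hφ.continuous hφm.monotone hφorb x h
      have hψx : ψ x < x := by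
        have := hψm h
        rwa [hleft x] at this
      obtain ⟨b, hb1, hb2⟩ := aux_down ψ hψ.continuous hψm.monotone hψorb x hψx
      have hfb : φ b = b := by have := congrArg φ hb2; rw [hright] at this; exact this.symm
      exact ⟨⟨a, ha1, ha2⟩, ⟨b, hb1, hfb⟩⟩
  obtain ⟨⟨a, hax, ha⟩, ⟨b, hbx, hb⟩⟩ := key
  set S : Set ℝ := {t | φ t = t} with hS
  have hSclosed : IsClosed S := isClosed_eq hφ.continuous continuous_id
  -- x₂ := inf of fixed points ≥ x
  have hne₂ : (S ∩ Set.Ici x).Nonempty := ⟨a, ha, hax.le⟩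
  have hbd₂ : BddBelow (S ∩ Set.Ici x) := ⟨x, fun t ht => ht.2⟩
  have hmem₂ : sInf (S ∩ Set.Ici x) ∈ S ∩ Set.Ici x :=
    (hSclosed.inter isClosed_Ici).csInf_mem hne₂ hbd₂
  set x₂ := sInf (S ∩ Set.Ici x) with hx₂
  have hxx₂ : x < x₂ := lt_of_le_of_ne hmem₂.2 (by intro hcon; exact hx (hcon ▸ hmem₂.1))
  -- x₁ := sup of fixed points ≤ x
  have hne₁ : (S ∩ Set.Iic x).Nonempty := ⟨b, hb, hbx.le⟩
  have hbd₁ : BddAbove (S ∩ Set.Iic x) := ⟨x, fun t ht => ht.2⟩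
  have hmem₁ : sSup (S ∩ Set.Iic x) ∈ S ∩ Set.Iic x :=
    (hSclosed.inter isClosed_Iic).csSup_mem hne₁ hbd₁
  set x₁ := sSup (S ∩ Set.Iic x) with hx₁
  have hxx₁ : x₁ < x := lt_of_le_of_ne hmem₁.2 (by intro hcon; exact hx (hcon ▸ hmem₁.1))
  refine ⟨x₁, x₂, hmem₁.1, hmem₂.1, hxx₁, hxx₂, ?_⟩
  rintro t ⟨ht1, ht2⟩ hft
  rcases le_or_gt x t with hxt | htx
  · exact absurd (csInf_le hbd₂ ⟨hft, hxt⟩) ht2.not_ge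
  · exact absurd (le_csSup hbd₁ ⟨hft, htx.le⟩) ht1.not_ge
end

section
/- Let ψ : ℝ → ℝ be continuous and differentiable at the points x₁ and x₂, where x₁ < x₂, ψ(x₁) = x₁, ψ(x₂) = x₂, ψ(t) ≠ t for all t in the open interval (x₁, x₂), and assume 0 < ψ′(x₁) ≤ 1 and 0 < ψ′(x₂) ≤ 1. Then ψ′(x₁) = 1 or ψ′(x₂) = 1. -/
/-!
If neither derivative were `1`, both would be `< 1`, so `t ↦ t - ψ t` has positive derivative
at the two fixed points. It is therefore positive just to the right of `x₁` and negative just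
to the left of `x₂`, and the intermediate value theorem yields a fixed point strictly between.
-/

open Filter Topology Set

namespace HasDerivAt

variable {f : ℝ → ℝ} {f' x : ℝ}

theorem eventually_pos_nhdsGT (hf : HasDerivAt f f' x) (hf' : 0 < f') (hx : f x = 0) :
    ∀ᶠ t in 𝓝[>] x, 0 < f t := by
  have hslope : Tendsto (slope f x) (𝓝[>] x) (𝓝 f') :=
    (hasDerivAt_iff_tendsto_slope.mp hf).mono_left (nhdsGT_le_nhdsNE x)
  filter_upwards [hslope.eventually (eventually_gt_nhds hf'), self_mem_nhdsWithin]
    with t ht (hxt : x < t)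
  exact pos_of_slope_pos hxt ht hx

theorem eventually_neg_nhdsLT (hf : HasDerivAt f f' x) (hf' : 0 < f') (hx : f x = 0) :
    ∀ᶠ t in 𝓝[<] x, f t < 0 := by
  have hslope : Tendsto (slope f x) (𝓝[<] x) (𝓝 f') :=
    (hasDerivAt_iff_tendsto_slope.mp hf).mono_left (nhdsLT_le_nhdsNE x)
  filter_upwards [hslope.eventually (eventually_gt_nhds hf'), self_mem_nhdsWithin]
    with t ht (htx : t < x)
  exact neg_of_slope_pos htx ht hx

end HasDerivAt

theorem exists_mem_Ioo_eq_zero_of_hasDerivAt_pos {f : ℝ → ℝ} {a b da db : ℝ} (hab : a < b)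
    (hf : ContinuousOn f (Icc a b)) (ha : f a = 0) (hb : f b = 0)
    (hda : HasDerivAt f da a) (hda_pos : 0 < da) (hdb : HasDerivAt f db b) (hdb_pos : 0 < db) :
    ∃ c ∈ Ioo a b, f c = 0 := by
  obtain ⟨u, hu_neg, hu⟩ := ((hdb.eventually_neg_nhdsLT hdb_pos hb).and
    (Ioo_mem_nhdsLT hab)).exists
  obtain ⟨s, hs_pos, hs⟩ := ((hda.eventually_pos_nhdsGT hda_pos ha).and
    (Ioo_mem_nhdsGT hu.1)).exists
  obtain ⟨c, hc, hfc⟩ := intermediate_value_Ioo' hs.2.le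
    (hf.mono (Icc_subset_Icc hs.1.le hu.2.le)) ⟨hu_neg, hs_pos⟩
  exact ⟨c, ⟨hs.1.trans hc.1, hc.2.trans hu.2⟩, hfc⟩

/-- If `ψ` is continuous with fixed points `x₁ < x₂`, no fixed point strictly in between,
and `0 < ψ′(x₁) ≤ 1`, `0 < ψ′(x₂) ≤ 1`, then `ψ′(x₁) = 1` or `ψ′(x₂) = 1`. -/
theorem stmt10 (ψ : ℝ → ℝ) (x₁ x₂ : ℝ)
    (hcont : Continuous ψ)
    (hdiff₁ : DifferentiableAt ℝ ψ x₁) (hdiff₂ : DifferentiableAt ℝ ψ x₂)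
    (hlt : x₁ < x₂)
    (hfix₁ : ψ x₁ = x₁) (hfix₂ : ψ x₂ = x₂)
    (hnofix : ∀ t ∈ Set.Ioo x₁ x₂, ψ t ≠ t)
    (hd₁ : 0 < deriv ψ x₁ ∧ deriv ψ x₁ ≤ 1)
    (hd₂ : 0 < deriv ψ x₂ ∧ deriv ψ x₂ ≤ 1) :
    deriv ψ x₁ = 1 ∨ deriv ψ x₂ = 1 := by
  by_contra! hne
  have hlt₁ : deriv ψ x₁ < 1 := hd₁.2.lt_of_ne hne.1
  have hlt₂ : deriv ψ x₂ < 1 := hd₂.2.lt_of_ne hne.2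
  obtain ⟨c, hc, hfc⟩ := exists_mem_Ioo_eq_zero_of_hasDerivAt_pos (f := fun t => t - ψ t) hlt
    (continuous_id.sub hcont).continuousOn (by simp [hfix₁]) (by simp [hfix₂])
    ((hasDerivAt_id x₁).sub hdiff₁.hasDerivAt) (sub_pos.mpr hlt₁)
    ((hasDerivAt_id x₂).sub hdiff₂.hasDerivAt) (sub_pos.mpr hlt₂)
  exact hnofix c hc (sub_eq_zero.mp hfc).symm
end

section
/- Fix an integer s ≥ 3. Let ψ : ℝ → ℝ be infinitely differentiable with ψ(x₁) = x₁ and ψ′(x₁) = 1, and assume that for every n ≥ 1 and every j with 2 ≤ j ≤ s−1 the j-th derivative of the n-fold iterate of ψ at x₁ vanishes: (ψⁿ)⁽ʲ⁾(x₁) = 0. Then for every n ≥ 1 one has (ψⁿ)⁽ˢ⁾(x₁) = n · ψ⁽ˢ⁾(x₁). -/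
open Filter Topology Function Set OrderedFinpartition


open Function Set OrderedFinpartition

/-- The ordered finpartition of `Fin n` into a single block. -/
def OrderedFinpartition.single (n : ℕ) (hn : 0 < n) : OrderedFinpartition n where
  length := 1
  partSize _ := n
  partSize_pos _ := hn
  emb _ := id
  emb_strictMono _ := strictMono_id
  parts_strictMono := Subsingleton.strictMono _
  disjoint a _ b _ h := absurd (Subsingleton.elim a b) h
  cover x := ⟨0, x, rfl⟩

lemma strictMono_fin_id {n : ℕ} (f : Fin n → Fin n) (hf : StrictMono f) : f = id := by
  apply (StrictMono.range_inj hf strictMono_id).mp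
  rw [Set.range_id]
  exact Set.range_eq_univ.mpr (Finite.surjective_of_injective hf.injective)

lemma sum_partSize {n : ℕ} (c : OrderedFinpartition n) :
    ∑ m : Fin c.length, c.partSize m = n := by
  have := c.sum_sigma_eq_sum (fun _ => (1 : ℕ))
  simpa using this

lemma eq_atomic {n : ℕ} (c : OrderedFinpartition n) (h : ∀ m, c.partSize m = 1) :
    c = OrderedFinpartition.atomic n := by
  have hl : c.length = n := by
    have := sum_partSize c
    simp only [h] at this
    simpa using this
  obtain ⟨l, sz, pos, emb, hme, hpm, dj, cov⟩ := c
  simp only at h hl hpm ⊢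
  subst hl
  have hsz : sz = fun _ => 1 := funext h
  subst hsz
  have h2 : (fun m => emb m ⟨1 - 1, Nat.sub_one_lt_of_lt (pos m)⟩) = id :=
    strictMono_fin_id _ hpm
  have h3 : emb = fun m (_ : Fin 1) => m := by
    funext m j
    have : j = ⟨1 - 1, Nat.sub_one_lt_of_lt (pos m)⟩ := Subsingleton.elim _ _
    rw [this]
    exact congrFun h2 m
  subst h3
  rfl

lemma eq_single {n : ℕ} (hn : 0 < n) (c : OrderedFinpartition n) (m₀ : Fin c.length)
    (h : c.partSize m₀ = n) : c = OrderedFinpartition.single n hn := by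
  have hl : c.length = 1 := by
    by_contra hne
    have h2 : 2 ≤ c.length := by
      have := c.length_pos hn
      omega
    have : n + 1 ≤ ∑ m : Fin c.length, c.partSize m := by
      have : Nontrivial (Fin c.length) := Fin.nontrivial_iff_two_le.mpr h2
      obtain ⟨m₁, hm₁⟩ := exists_ne m₀
      calc n + 1 = c.partSize m₀ + 1 := by rw [h]
        _ ≤ c.partSize m₀ + c.partSize m₁ := by
            have := c.partSize_pos m₁; omega
        _ = ∑ m ∈ ({m₀, m₁} : Finset (Fin c.length)), c.partSize m := by
            rw [Finset.sum_pair (Ne.symm hm₁)]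
        _ ≤ ∑ m : Fin c.length, c.partSize m :=
            Finset.sum_le_sum_of_subset (Finset.subset_univ _)
    rw [sum_partSize c] at this
    omega
  obtain ⟨l, sz, pos, emb, hme, hpm, dj, cov⟩ := c
  simp only at hl h hme ⊢
  subst hl
  have hsz : sz = fun _ => n := by
    funext m
    have : m = m₀ := Subsingleton.elim _ _
    rw [this, h]
  subst hsz
  have h3 : emb = fun (_ : Fin 1) => id := by
    funext m
    exact strictMono_fin_id _ (hme m)
  subst h3
  rfl

lemma key_comp (s : ℕ) (hs : 3 ≤ s) (x₁ : ℝ) (f g : ℝ → ℝ)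
    (hf : ContDiff ℝ (s : ℕ∞) f) (hg : ContDiff ℝ (s : ℕ∞) g)
    (hfx : f x₁ = x₁)
    (hf1 : deriv f x₁ = 1) (hg1 : deriv g x₁ = 1)
    (hfj : ∀ j, 2 ≤ j → j ≤ s - 1 → iteratedDeriv j f x₁ = 0)
    (hgj : ∀ j, 2 ≤ j → j ≤ s - 1 → iteratedDeriv j g x₁ = 0) :
    iteratedDeriv s (g ∘ f) x₁ = iteratedDeriv s g x₁ + iteratedDeriv s f x₁ := by
  have hpos : 0 < s := by omega
  set p : FormalMultilinearSeries ℝ ℝ ℝ := ftaylorSeries ℝ f x₁ with hpdef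
  set q : FormalMultilinearSeries ℝ ℝ ℝ := ftaylorSeries ℝ g x₁ with hqdef
  have hTf : HasFTaylorSeriesUpToOn (s : ℕ∞) f (ftaylorSeries ℝ f) Set.univ :=
    (contDiff_iff_ftaylorSeries.mp hf).hasFTaylorSeriesUpToOn Set.univ
  have hTg : HasFTaylorSeriesUpToOn (s : ℕ∞) g (ftaylorSeries ℝ g) Set.univ :=
    (contDiff_iff_ftaylorSeries.mp hg).hasFTaylorSeriesUpToOn Set.univ
  have hT := hTg.comp hTf (Set.mapsTo_univ f Set.univ)
  have heq : iteratedFDeriv ℝ s (g ∘ f) x₁ =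
      (ftaylorSeries ℝ g (f x₁)).taylorComp (ftaylorSeries ℝ f x₁) s := by
    have h2 := hT.eq_iteratedFDerivWithin_of_uniqueDiffOn (m := s)
      (by exact_mod_cast le_rfl) uniqueDiffOn_univ (Set.mem_univ x₁)
    rw [iteratedFDerivWithin_univ] at h2
    exact h2.symm
  have key : iteratedDeriv s (g ∘ f) x₁ = ∑ c : OrderedFinpartition s,
      (q.compAlongOrderedFinpartition p c) (fun _ => 1) := by
    rw [iteratedDeriv_eq_iteratedFDeriv, heq, hfx]
    rw [← hpdef, ← hqdef]
    simp [FormalMultilinearSeries.taylorComp]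
  have hp : ∀ j, p j (fun _ => 1) = iteratedDeriv j f x₁ := fun j =>
    (iteratedDeriv_eq_iteratedFDeriv).symm
  have hq : ∀ j, q j (fun _ => 1) = iteratedDeriv j g x₁ := fun j =>
    (iteratedDeriv_eq_iteratedFDeriv).symm
  have hp1 : p 1 (fun _ => 1) = 1 := by rw [hp, iteratedDeriv_one, hf1]
  have hq1 : q 1 (fun _ => 1) = 1 := by rw [hq, iteratedDeriv_one, hg1]
  rw [key]
  rw [Finset.sum_eq_add_of_mem (OrderedFinpartition.atomic s)
    (OrderedFinpartition.single s hpos) (Finset.mem_univ _) (Finset.mem_univ _)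
    ?hne ?hzero]
  case hne =>
    intro h
    have := congrArg OrderedFinpartition.length h
    simp [OrderedFinpartition.atomic, OrderedFinpartition.single] at this
    omega
  case hzero =>
    rintro c - ⟨hca, hcs⟩
    by_cases h : ∃ m, 2 ≤ c.partSize m ∧ c.partSize m ≤ s - 1
    · obtain ⟨m, hm1, hm2⟩ := h
      apply ContinuousMultilinearMap.map_coord_zero _ m
      show p (c.partSize m) ((fun _ => (1:ℝ)) ∘ c.emb m) = 0
      have : ((fun _ => (1:ℝ)) ∘ c.emb m) = fun _ => (1:ℝ) := rfl
      rw [this, hp]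
      exact hfj _ hm1 hm2
    · push_neg at h
      exfalso
      by_cases h2 : ∃ m, c.partSize m = s
      · obtain ⟨m, hm⟩ := h2
        exact hcs (eq_single hpos c m hm)
      · push_neg at h2
        apply hca
        apply eq_atomic
        intro m
        have := h m
        have h3 := c.partSize_pos m
        have h4 := c.partSize_le m
        have h5 := h2 m
        omega
  · -- value of the two remaining terms
    have hA : (q.compAlongOrderedFinpartition p (OrderedFinpartition.atomic s))
        (fun _ => (1:ℝ)) = iteratedDeriv s g x₁ := by
      show q s (fun _ => p 1 ((fun _ => (1:ℝ)) ∘ _)) = _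
      have : (fun (m : Fin s) => p 1 ((fun _ => (1:ℝ)) ∘ (OrderedFinpartition.atomic s).emb m))
          = fun _ => (1:ℝ) := by
        funext m
        exact hp1
      rw [this, hq]
    have hB : (q.compAlongOrderedFinpartition p (OrderedFinpartition.single s hpos))
        (fun _ => (1:ℝ)) = iteratedDeriv s f x₁ := by
      show q 1 (fun _ => p s ((fun _ => (1:ℝ)) ∘ id)) = _
      have h1 : (fun (_ : Fin 1) => p s ((fun _ => (1:ℝ)) ∘ (id : Fin s → Fin s)))
          = fun _ => iteratedDeriv s f x₁ := by
        funext m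
        exact hp s
      rw [h1]
      have h2 := (q 1).map_smul_univ (fun _ => iteratedDeriv s f x₁) (fun _ => (1:ℝ))
      simp only [smul_eq_mul, mul_one, Finset.prod_const, Finset.card_univ,
        Fintype.card_fin, pow_one] at h2
      rw [h2, hq1, mul_one]
    rw [hA, hB]


/-- Fix `s ≥ 3`. If `ψ` is smooth with `ψ(x₁) = x₁`, `ψ′(x₁) = 1`, and all derivatives of
order `2 ≤ j ≤ s − 1` of every iterate `ψⁿ` (`n ≥ 1`) vanish at `x₁`, then
`(ψⁿ)⁽ˢ⁾(x₁) = n · ψ⁽ˢ⁾(x₁)` for every `n ≥ 1`. -/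
theorem stmt12 (s : ℕ) (hs : 3 ≤ s) (ψ : ℝ → ℝ) (x₁ : ℝ)
    (hψ : ContDiff ℝ (⊤ : ℕ∞) ψ)
    (hfix : ψ x₁ = x₁) (hder : deriv ψ x₁ = 1)
    (hvanish : ∀ n : ℕ, 1 ≤ n → ∀ j : ℕ, 2 ≤ j → j ≤ s - 1 →
      iteratedDeriv j (ψ^[n]) x₁ = 0) :
    ∀ n : ℕ, 1 ≤ n → iteratedDeriv s (ψ^[n]) x₁ = (n : ℝ) * iteratedDeriv s ψ x₁ := by
  have hψs : ContDiff ℝ (s : ℕ∞) ψ := hψ.of_le (by exact_mod_cast le_top)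
  have hdiff : Differentiable ℝ ψ := hψs.differentiable (by exact_mod_cast (show s ≠ 0 by omega))
  have hsm : ∀ n : ℕ, ContDiff ℝ (s : ℕ∞) (ψ^[n]) := by
    intro n
    induction n with
    | zero => simpa using contDiff_id
    | succ n ih =>
      rw [Function.iterate_succ]
      exact ih.comp hψs
  have hfix' : ∀ n : ℕ, ψ^[n] x₁ = x₁ := fun n => Function.iterate_fixed hfix n
  have hder' : ∀ n : ℕ, deriv (ψ^[n]) x₁ = 1 := by
    intro n
    induction n with
    | zero => simpa using deriv_id x₁
    | succ n ih =>
      rw [Function.iterate_succ]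
      rw [deriv_comp x₁ ((hsm n).differentiable (by
          exact_mod_cast (show s ≠ 0 by omega)) (ψ x₁)) (hdiff x₁)]
      rw [hfix, ih, hder, mul_one]
  have hfj : ∀ j, 2 ≤ j → j ≤ s - 1 → iteratedDeriv j ψ x₁ = 0 := by
    intro j h1 h2
    have := hvanish 1 le_rfl j h1 h2
    rwa [Function.iterate_one] at this
  intro n hn
  induction n, hn using Nat.le_induction with
  | base => rw [Function.iterate_one]; push_cast; ring
  | succ n hn ih =>
    rw [Function.iterate_succ]
    rw [key_comp s hs x₁ ψ (ψ^[n]) hψs (hsm n) hfix hder (hder' n) hfj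
      (fun j h1 h2 => hvanish n hn j h1 h2)]
    rw [ih]
    push_cast
    ring
end

section
/- Let ψ : ℝ → ℝ be real analytic on all of ℝ, let x₁ ∈ ℝ satisfy ψ(x₁) = x₁ and ψ′(x₁) = 1, and assume that for every integer s ≥ 2 one has lim_{n→∞} (1/n) · (ψⁿ)⁽ˢ⁾(x₁) = 0, where ψⁿ denotes the n-fold iterate of ψ. Then ψ⁽ˢ⁾(x₁) = 0 for every s ≥ 2 and consequently ψ(x) = x for every x ∈ ℝ. -/
/-!
Let `q` be the power series of `ψ` at the fixed point `x₁`. If `q` has no terms of orders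
`2, …, s - 1`, then composing with `q` adds `q`'s order-`s` coefficient, so the series of `ψⁿ`
has order-`s` coefficient `n • q_s`, and `(1/n) (ψⁿ)⁽ˢ⁾(x₁) = s! q_s` does not depend on `n`.
The limit hypothesis forces `q_s = 0`; by induction `q` is the series of the identity, so
`ψ = id` near `x₁`, and everywhere by analytic continuation.
-/

open Filter Topology

namespace FormalMultilinearSeries

variable {𝕜 : Type*} [NontriviallyNormedField 𝕜]

theorem coeff_comp (q p : FormalMultilinearSeries 𝕜 𝕜 𝕜) (n : ℕ) :
    (q.comp p).coeff n =
      ∑ c : Composition n, (∏ i, p.coeff (c.blocksFun i)) * q.coeff c.length := by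
  simp only [coeff, FormalMultilinearSeries.comp, _root_.sum_apply]
  refine Finset.sum_congr rfl fun c _ => ?_
  rw [compAlongComposition_apply, apply_eq_prod_smul_coeff, smul_eq_mul]
  rfl

theorem coeff_id_of_one_lt (x : 𝕜) {n : ℕ} (hn : 1 < n) : (id 𝕜 𝕜 x).coeff n = 0 := by
  rw [coeff_eq_zero, id_apply_of_one_lt 𝕜 𝕜 x hn]

theorem coeff_comp_one (q p : FormalMultilinearSeries 𝕜 𝕜 𝕜) :
    (q.comp p).coeff 1 = p.coeff 1 * q.coeff 1 := by
  rw [coeff, comp_coeff_one, apply_eq_pow_smul_coeff, pow_one, smul_eq_mul]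
  rfl

theorem coeff_comp_eq_add {q p : FormalMultilinearSeries 𝕜 𝕜 𝕜} {m : ℕ} (hm : 2 ≤ m)
    (hq1 : q.coeff 1 = 1) (hp1 : p.coeff 1 = 1) (hq : ∀ j, 2 ≤ j → j < m → q.coeff j = 0) :
    (q.comp p).coeff m = p.coeff m + q.coeff m := by
  have hm0 : 0 < m := by omega
  have hne : Composition.single m hm0 ≠ Composition.ones m := by
    rw [Ne, Composition.eq_ones_iff_length, Composition.single_length]
    omega
  -- only the compositions of `m` into one block and into `m` ones survive
  rw [coeff_comp, Finset.sum_eq_add_of_mem _ _ (Finset.mem_univ _) (Finset.mem_univ _) hne]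
  · have hsingle (i) : p.coeff ((Composition.single m hm0).blocksFun i) = p.coeff m := by
      rw [Composition.single_blocksFun]
    rw [Finset.prod_congr rfl fun i _ => hsingle i, Finset.prod_const, Finset.card_univ,
      Fintype.card_fin, Composition.single_length]
    simp [Composition.ones_blocksFun, hq1, hp1]
  · rintro c - ⟨hc_single, hc_ones⟩
    rw [Ne, Composition.eq_single_iff_length] at hc_single
    rw [Ne, Composition.eq_ones_iff_length] at hc_ones
    have := c.length_le
    have := c.length_pos_of_pos hm0
    rw [hq c.length (by omega) (by omega), mul_zero]

theorem coeff_one_iterate_comp {q : FormalMultilinearSeries 𝕜 𝕜 𝕜} (hq1 : q.coeff 1 = 1)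
    (x : 𝕜) (n : ℕ) : ((q.comp ·)^[n] (id 𝕜 𝕜 x)).coeff 1 = 1 := by
  induction n with
  | zero => rfl
  | succ n ih => rw [Function.iterate_succ_apply', coeff_comp_one, ih, hq1, one_mul]

theorem coeff_iterate_comp {q : FormalMultilinearSeries 𝕜 𝕜 𝕜} {m : ℕ} (hm : 2 ≤ m)
    (hq1 : q.coeff 1 = 1) (hq : ∀ j, 2 ≤ j → j < m → q.coeff j = 0) (x : 𝕜) (n : ℕ) :
    ((q.comp ·)^[n] (id 𝕜 𝕜 x)).coeff m = n * q.coeff m := by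
  induction n with
  | zero => simp [coeff_id_of_one_lt x hm]
  | succ n ih =>
    rw [Function.iterate_succ_apply', coeff_comp_eq_add hm hq1 (coeff_one_iterate_comp hq1 x n) hq,
      ih, Nat.cast_succ, add_one_mul]

theorem eq_id_of_coeff {p : FormalMultilinearSeries 𝕜 𝕜 𝕜} {x : 𝕜} (h0 : p.coeff 0 = x)
    (h1 : p.coeff 1 = 1) (h : ∀ n, 2 ≤ n → p.coeff n = 0) : p = id 𝕜 𝕜 x := by
  ext1 n
  rw [← mkPiRing_coeff_eq p, ← mkPiRing_coeff_eq (id 𝕜 𝕜 x)]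
  congr 1
  match n with
  | 0 => exact h0
  | 1 => exact h1
  | n + 2 => rw [h _ (by omega), coeff_id_of_one_lt x (by omega)]

end FormalMultilinearSeries

section

variable {𝕜 E F : Type*} [NontriviallyNormedField 𝕜]
  [NormedAddCommGroup E] [NormedSpace 𝕜 E] [NormedAddCommGroup F] [NormedSpace 𝕜 F]

theorem hasFPowerSeriesAt_id (x : E) :
    HasFPowerSeriesAt id (FormalMultilinearSeries.id 𝕜 E x) x :=
  (ContinuousLinearMap.id 𝕜 E).hasFPowerSeriesAt x

theorem HasFPowerSeriesAt.iterate {f : E → E} {p : FormalMultilinearSeries 𝕜 E E} {x : E}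
    (hf : HasFPowerSeriesAt f p x) (hx : f x = x) (n : ℕ) :
    HasFPowerSeriesAt f^[n] ((p.comp ·)^[n] (FormalMultilinearSeries.id 𝕜 E x)) x := by
  induction n with
  | zero => exact hasFPowerSeriesAt_id x
  | succ n ih =>
    rw [Function.iterate_succ', Function.iterate_succ_apply']
    exact (Function.iterate_fixed hx n ▸ hf).comp ih

theorem HasFPowerSeriesAt.iteratedDeriv_eq_factorial_smul_coeff [CompleteSpace F]
    {f : 𝕜 → F} {p : FormalMultilinearSeries 𝕜 𝕜 F} {x : 𝕜} (h : HasFPowerSeriesAt f p x)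
    (n : ℕ) :
    iteratedDeriv n f x = n.factorial • p.coeff n := by
  obtain ⟨r, hr⟩ := h
  rw [iteratedDeriv_eq_iteratedFDeriv, ← hr.factorial_smul 1 n]
  rfl

theorem HasFPowerSeriesAt.eventuallyEq_id {f : E → E} {x : E}
    (h : HasFPowerSeriesAt f (FormalMultilinearSeries.id 𝕜 E x) x) : f =ᶠ[𝓝 x] id := by
  have h_sub := h.sub (hasFPowerSeriesAt_id x)
  rw [sub_self] at h_sub
  filter_upwards [h_sub.eventually_eq_zero] with y hy
  exact sub_eq_zero.mp hy

end

/-- If `ψ` is real analytic on `ℝ`, `x₁` is a fixed point with `ψ′(x₁) = 1`, and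
`(1/n)·(ψⁿ)⁽ˢ⁾(x₁) → 0` for every `s ≥ 2`, then all higher derivatives of `ψ` at `x₁`
vanish and `ψ` is the identity. -/
theorem stmt13 (ψ : ℝ → ℝ) (x₁ : ℝ)
    (hψ : AnalyticOnNhd ℝ ψ Set.univ)
    (hfix : ψ x₁ = x₁) (hder : deriv ψ x₁ = 1)
    (hlim : ∀ s : ℕ, 2 ≤ s →
      Tendsto (fun n : ℕ => (n : ℝ)⁻¹ * iteratedDeriv s (ψ^[n]) x₁) atTop (𝓝 0)) :
    (∀ s : ℕ, 2 ≤ s → iteratedDeriv s ψ x₁ = 0) ∧ ∀ x : ℝ, ψ x = x := by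
  obtain ⟨q, hq⟩ := hψ x₁ (Set.mem_univ x₁)
  have hq1 : q.coeff 1 = 1 := hder ▸ hq.deriv.symm
  have hq_higher : ∀ s, 2 ≤ s → q.coeff s = 0 := by
    intro s
    induction s using Nat.strong_induction_on with
    | _ s ih =>
      intro hs
      have h_const : ∀ᶠ n : ℕ in atTop,
          (n : ℝ)⁻¹ * iteratedDeriv s (ψ^[n]) x₁ = s.factorial * q.coeff s := by
        filter_upwards [eventually_ne_atTop 0] with n hn
        rw [(hq.iterate hfix n).iteratedDeriv_eq_factorial_smul_coeff, nsmul_eq_mul,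
          FormalMultilinearSeries.coeff_iterate_comp hs hq1 fun j hj hjs => ih j hjs hj]
        field_simp
      have := tendsto_nhds_unique ((hlim s hs).congr' h_const) tendsto_const_nhds
      simpa [Nat.factorial_ne_zero] using this.symm
  refine ⟨fun s hs => ?_, fun x => ?_⟩
  · rw [hq.iteratedDeriv_eq_factorial_smul_coeff, hq_higher s hs, smul_zero]
  · have hq_id : q = FormalMultilinearSeries.id ℝ ℝ x₁ :=
      FormalMultilinearSeries.eq_id_of_coeff (hfix ▸ hq.coeff_zero 1) hq1 hq_higher
    exact congrFun (hψ.eq_of_eventuallyEq analyticOnNhd_id (hq_id ▸ hq).eventuallyEq_id) x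
end

section
/- Let f : ℝ → ℝ be a real analytic even function (f(−x) = f(x) for all x) such that there is a constant a with 0 ≤ a < 1 and |f′(x)| ≤ a for all x ∈ ℝ. Then there exists a strictly decreasing function φ : ℝ → ℝ such that: (1) x + φ(x) = f(x − φ(x)) for every x ∈ ℝ; (2) for every x, y ∈ ℝ, if x + y = f(x − y) then y = φ(x) (uniqueness); and (3) φ(φ(x)) = x for every x ∈ ℝ. -/
/-!
Substituting `y = f (x - y) - x` turns the equation `x + y = f (x - y)` into a fixed-point
problem for a map with Lipschitz constant `a < 1`, so Banach's theorem gives a unique solution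
`φ x` for each `x`. Along the curve, `x + φ x` and `x - φ x` are related by `f`, a contraction, so
the sum cannot grow as fast as the difference: this forces `φ` to decrease. For even `f` the
equation is symmetric in `x` and `y`, and uniqueness makes `φ` an involution.
-/

open NNReal

lemma lipschitzWith_toNNReal_of_abs_deriv_le {f : ℝ → ℝ} {a : ℝ} (hf : Differentiable ℝ f)
    (hbound : ∀ x, |deriv f x| ≤ a) : LipschitzWith a.toNNReal f :=
  lipschitzWith_of_nnnorm_deriv_le hf fun x => by
    rw [← NNReal.coe_le_coe, coe_nnnorm, Real.coe_toNNReal']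
    exact le_max_of_le_left (hbound x)

section ImplicitFn

variable {f : ℝ → ℝ} {K : ℝ≥0}

lemma LipschitzWith.contractingWith_sub_sub (hf : LipschitzWith K f) (hK : K < 1) (x : ℝ) :
    ContractingWith K (fun y => f (x - y) - x) := by
  refine ⟨hK, LipschitzWith.of_dist_le_mul fun y₁ y₂ => ?_⟩
  calc dist (f (x - y₁) - x) (f (x - y₂) - x) = dist (f (x - y₁)) (f (x - y₂)) :=
        dist_sub_right _ _ _
    _ ≤ K * dist (x - y₁) (x - y₂) := hf.dist_le_mul _ _
    _ = K * dist y₁ y₂ := by rw [dist_sub_left]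

noncomputable def implicitFn (hf : LipschitzWith K f) (hK : K < 1) (x : ℝ) : ℝ :=
  (hf.contractingWith_sub_sub hK x).fixedPoint

variable (hf : LipschitzWith K f) (hK : K < 1)

lemma add_implicitFn (x : ℝ) : x + implicitFn hf hK x = f (x - implicitFn hf hK x) := by
  have h := (hf.contractingWith_sub_sub hK x).fixedPoint_isFixedPt
  rw [Function.IsFixedPt] at h
  unfold implicitFn
  linarith

lemma eq_implicitFn {x y : ℝ} (h : x + y = f (x - y)) : y = implicitFn hf hK x :=
  (hf.contractingWith_sub_sub hK x).fixedPoint_unique (by rw [Function.IsFixedPt]; linarith)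

lemma strictAnti_implicitFn : StrictAnti (implicitFn hf hK) := by
  intro x₁ x₂ hx
  by_contra! hφ
  set φ := implicitFn hf hK
  -- `d` is both `f u₂ - f u₁` and an upper bound for `|u₂ - u₁|`, with `uᵢ = xᵢ - φ xᵢ`.
  set d := (x₂ - x₁) + (φ x₂ - φ x₁)
  have hd_pos : 0 < d := by positivity
  have hd_eq : d = f (x₂ - φ x₂) - f (x₁ - φ x₁) := by
    linarith [add_implicitFn hf hK x₁, add_implicitFn hf hK x₂]
  have hdist : dist (x₂ - φ x₂) (x₁ - φ x₁) ≤ d := by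
    rw [Real.dist_eq, abs_le]
    constructor <;> linarith
  have hd_le : d ≤ K * d :=
    calc d ≤ dist (f (x₂ - φ x₂)) (f (x₁ - φ x₁)) := by rw [hd_eq, Real.dist_eq]; exact le_abs_self _
      _ ≤ K * dist (x₂ - φ x₂) (x₁ - φ x₁) := hf.dist_le_mul _ _
      _ ≤ K * d := by gcongr
  have hK' : (K : ℝ) < 1 := by exact_mod_cast hK
  nlinarith

lemma implicitFn_implicitFn (heven : ∀ x, f (-x) = f x) (x : ℝ) :
    implicitFn hf hK (implicitFn hf hK x) = x := by
  refine (eq_implicitFn hf hK ?_).symm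
  rw [← heven, neg_sub, add_comm]
  exact add_implicitFn hf hK x

end ImplicitFn

theorem stmt16_general (f : ℝ → ℝ)
    (hanal : AnalyticOnNhd ℝ f Set.univ)
    (heven : ∀ x : ℝ, f (-x) = f x)
    (a : ℝ) (ha1 : a < 1)
    (hbound : ∀ x : ℝ, |deriv f x| ≤ a) :
    ∃ φ : ℝ → ℝ, StrictAnti φ ∧
      (∀ x : ℝ, x + φ x = f (x - φ x)) ∧
      (∀ x y : ℝ, x + y = f (x - y) → y = φ x) ∧
      (∀ x : ℝ, φ (φ x) = x) := by
  have hf : LipschitzWith a.toNNReal f :=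
    lipschitzWith_toNNReal_of_abs_deriv_le (fun x => (hanal x trivial).differentiableAt) hbound
  have hK : a.toNNReal < 1 := Real.toNNReal_lt_one.mpr ha1
  exact ⟨implicitFn hf hK, strictAnti_implicitFn hf hK, add_implicitFn hf hK,
    fun _ _ => eq_implicitFn hf hK, implicitFn_implicitFn hf hK heven⟩

/-- For a real analytic even function `f` with `|f′| ≤ a < 1`, the equation
`x + y = f(x − y)` implicitly defines a strictly decreasing function `y = φ(x)` on `ℝ`
satisfying `φ(φ(x)) = x`. -/
theorem stmt16 (f : ℝ → ℝ)
    (hanal : AnalyticOnNhd ℝ f Set.univ)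
    (heven : ∀ x : ℝ, f (-x) = f x)
    (a : ℝ) (ha0 : 0 ≤ a) (ha1 : a < 1)
    (hbound : ∀ x : ℝ, |deriv f x| ≤ a) :
    ∃ φ : ℝ → ℝ, StrictAnti φ ∧
      (∀ x : ℝ, x + φ x = f (x - φ x)) ∧
      (∀ x y : ℝ, x + y = f (x - y) → y = φ x) ∧
      (∀ x : ℝ, φ (φ x) = x) :=
  stmt16_general f hanal heven a ha1 hbound
end

section
/- The function φ : ℝ → ℝ defined by φ(x) = −3x + √(8x² + 2) is strictly decreasing, is a bijection of ℝ onto ℝ, and satisfies φ(φ(x)) = x for every x ∈ ℝ (so that φ = φ⁻¹). -/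
/-!
The graph of `φ` is the branch `y + 3x ≥ 0` of the conic `x² + 6xy + y² = 2`, which is symmetric
in `x` and `y`; so `φ` is an involution, hence a bijection. It is strictly decreasing because
`x ↦ √(8x² + 2)` is `√8`-Lipschitz (Cauchy–Schwarz) and `√8 < 3`.

The same argument applies to `conicBranch b c` for `b ≥ 1`, `c ≥ 0`: the branch `y + bx ≥ 0`
of `x² + 2bxy + y² = c`.
-/

noncomputable def conicBranch (b c x : ℝ) : ℝ :=
  -b * x + √((b ^ 2 - 1) * x ^ 2 + c)

theorem abs_sqrt_mul_sq_add_sub_le {k c : ℝ} (hk : 0 ≤ k) (hc : 0 ≤ c) (x y : ℝ) :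
    |√(k * x ^ 2 + c) - √(k * y ^ 2 + c)| ≤ √k * |x - y| := by
  have hx : 0 ≤ k * x ^ 2 + c := by positivity
  have hy : 0 ≤ k * y ^ 2 + c := by positivity
  have cauchy_schwarz : k * x * y + c ≤ √(k * x ^ 2 + c) * √(k * y ^ 2 + c) := by
    rw [← Real.sqrt_mul hx]
    refine (le_abs_self _).trans (Real.abs_le_sqrt ?_)
    nlinarith [mul_nonneg (mul_nonneg hk hc) (sq_nonneg (x - y))]
  apply abs_le_of_sq_le_sq _ (by positivity)
  rw [mul_pow, sq_abs, Real.sq_sqrt hk]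
  nlinarith [Real.sq_sqrt hx, Real.sq_sqrt hy]

theorem strictAnti_neg_mul_add {g : ℝ → ℝ} {K b : ℝ} (hKb : K < b)
    (hg : ∀ x y, |g x - g y| ≤ K * |x - y|) : StrictAnti fun x => -b * x + g x := by
  intro x y hxy
  have hlip : g y - g x ≤ K * (y - x) := by
    simpa [abs_of_pos (sub_pos.mpr hxy)] using (le_abs_self _).trans (hg y x)
  nlinarith

variable {b c : ℝ}

theorem conicBranch_radicand_nonneg (hb : 1 ≤ b) (hc : 0 ≤ c) (x : ℝ) :
    0 ≤ (b ^ 2 - 1) * x ^ 2 + c :=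
  add_nonneg (mul_nonneg (by nlinarith) (sq_nonneg x)) hc

theorem conicBranch_strictAnti (hb : 1 ≤ b) (hc : 0 ≤ c) : StrictAnti (conicBranch b c) := by
  have hk : 0 ≤ b ^ 2 - 1 := by nlinarith
  have hKb : √(b ^ 2 - 1) < b := by
    rw [Real.sqrt_lt' (by linarith)]
    linarith
  exact strictAnti_neg_mul_add hKb (abs_sqrt_mul_sq_add_sub_le hk hc)

theorem add_mul_conicBranch_nonneg (hb : 1 ≤ b) (hc : 0 ≤ c) (x : ℝ) :
    0 ≤ x + b * conicBranch b c x := by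
  have hs := Real.sq_sqrt (conicBranch_radicand_nonneg hb hc x)
  have hsq : ((b ^ 2 - 1) * x) ^ 2 ≤ (b * √((b ^ 2 - 1) * x ^ 2 + c)) ^ 2 := by
    rw [mul_pow b, hs]
    nlinarith [mul_nonneg (sub_nonneg.mpr hb) (sq_nonneg x)]
  have hbound := (abs_le_of_sq_le_sq' hsq (by positivity)).2
  unfold conicBranch
  nlinarith

theorem conicBranch_sq_add (hb : 1 ≤ b) (hc : 0 ≤ c) (x : ℝ) :
    x ^ 2 + 2 * b * x * conicBranch b c x + conicBranch b c x ^ 2 = c := by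
  have hs := Real.sq_sqrt (conicBranch_radicand_nonneg hb hc x)
  unfold conicBranch
  linear_combination hs

theorem conicBranch_involutive (hb : 1 ≤ b) (hc : 0 ≤ c) :
    Function.Involutive (conicBranch b c) := by
  intro x
  set y := conicBranch b c x
  have hconic : (b ^ 2 - 1) * y ^ 2 + c = (x + b * y) ^ 2 := by
    linear_combination -conicBranch_sq_add hb hc x
  rw [conicBranch, hconic, Real.sqrt_sq (add_mul_conicBranch_nonneg hb hc x)]
  ring

/-- The function `φ(x) = −3x + √(8x² + 2)` is a strictly decreasing bijection of `ℝ` onto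
itself which is its own inverse: `φ(φ(x)) = x` for every `x ∈ ℝ`. -/
theorem stmt17 :
    StrictAnti (fun x : ℝ => -3 * x + Real.sqrt (8 * x ^ 2 + 2)) ∧
      Function.Bijective (fun x : ℝ => -3 * x + Real.sqrt (8 * x ^ 2 + 2)) ∧
      ∀ x : ℝ, (fun x : ℝ => -3 * x + Real.sqrt (8 * x ^ 2 + 2))
          ((fun x : ℝ => -3 * x + Real.sqrt (8 * x ^ 2 + 2)) x) = x := by
  have hφ : (fun x : ℝ => -3 * x + Real.sqrt (8 * x ^ 2 + 2)) = conicBranch 3 2 := by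
    funext x
    norm_num [conicBranch]
  have hinv := conicBranch_involutive (b := 3) (c := 2) (by norm_num) (by norm_num)
  rw [hφ]
  exact ⟨conicBranch_strictAnti (by norm_num) (by norm_num), hinv.bijective, hinv⟩
end
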